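/- arXiv:2102.12919 — 6 statements merged into one kernel-verified Lean document; each statement's English description precedes it below -/
import Mathlib

section
/- Let x_1, …, x_{n+1} ∈ ℝ^d and y_1, …, y_{n+1} ∈ ℝ. For j ∈ {1, …, n+1}, define w̃ = (∑_{i=1}^{n+1} x_i x_iᵀ)† (∑_{i=1}^{n+1} y_i x_i), w̃^{(j)} = (∑_{i≠j} x_i x_iᵀ)† (∑_{i≠j} y_i x_i), and the leverage h_j = ⟨(∑_{i=1}^{n+1} x_i x_iᵀ)† x_j, x_j⟩ ∈ [0,1]. Then for every j, ⟨w̃, x_j⟩ = (1 - h_j) ⟨w̃^{(j)}, x_j⟩ + h_j y_j; moreover, if x_j does not lie in the linear span of {x_i : i ≠ j}, then h_j = 1 and ⟨w̃, x_j⟩ = y_j. -/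
open Matrix

/-- `B` is the Moore–Penrose pseudoinverse of `A` (the four Penrose conditions; for real
matrices the pseudoinverse is the unique matrix satisfying them). -/
def IsMoorePenrose {d : ℕ} (A B : Matrix (Fin d) (Fin d) ℝ) : Prop :=
  A * B * A = A ∧ B * A * B = B ∧ (A * B)ᵀ = A * B ∧ (B * A)ᵀ = B * A

namespace LooAux

variable {d : ℕ}

lemma vecMulVec_mulVec' (v w u : Fin d → ℝ) :
    (vecMulVec v w).mulVec u = (w ⬝ᵥ u) • v := by
  ext i
  simp only [mulVec, dotProduct, vecMulVec_apply, Pi.smul_apply, smul_eq_mul,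
    Finset.sum_mul]
  exact Finset.sum_congr rfl fun j _ => by ring

lemma sum_mulVec' {ι : Type*} (s : Finset ι) (M : ι → Matrix (Fin d) (Fin d) ℝ)
    (u : Fin d → ℝ) :
    (∑ i ∈ s, M i).mulVec u = ∑ i ∈ s, (M i).mulVec u := by
  classical
  induction s using Finset.induction with
  | empty => simp
  | insert _ _ h ih => rw [Finset.sum_insert h, Finset.sum_insert h, add_mulVec, ih]

lemma sum_dotProduct' {ι : Type*} (s : Finset ι) (f : ι → Fin d → ℝ) (w : Fin d → ℝ) :
    (∑ i ∈ s, f i) ⬝ᵥ w = ∑ i ∈ s, f i ⬝ᵥ w := by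
  simp only [dotProduct, Finset.sum_apply, Finset.sum_mul]
  exact Finset.sum_comm

lemma mulVec_sum' {ι : Type*} (s : Finset ι) (M : Matrix (Fin d) (Fin d) ℝ)
    (f : ι → Fin d → ℝ) :
    M.mulVec (∑ i ∈ s, f i) = ∑ i ∈ s, M.mulVec (f i) := by
  simpa only [mulVecLin_apply] using map_sum M.mulVecLin f s

lemma mp_unique {A B C : Matrix (Fin d) (Fin d) ℝ} (hB : IsMoorePenrose A B)
    (hC : IsMoorePenrose A C) : B = C := by
  obtain ⟨hB1, hB2, hB3, hB4⟩ := hB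
  obtain ⟨hC1, hC2, hC3, hC4⟩ := hC
  have hAB : A * B = A * C := by
    calc A * B = (A * B)ᵀ := hB3.symm
      _ = Bᵀ * Aᵀ := transpose_mul _ _
      _ = Bᵀ * (A * C * A)ᵀ := by rw [hC1]
      _ = Bᵀ * (Aᵀ * (Cᵀ * Aᵀ)) := by rw [transpose_mul, transpose_mul]
      _ = (Bᵀ * Aᵀ) * (Cᵀ * Aᵀ) := by rw [Matrix.mul_assoc]
      _ = (A * B)ᵀ * (A * C)ᵀ := by rw [transpose_mul, transpose_mul A C]
      _ = (A * B) * (A * C) := by rw [hB3, hC3]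
      _ = ((A * B) * A) * C := by simp only [Matrix.mul_assoc]
      _ = A * C := by rw [hB1]
  have hBA : B * A = C * A := by
    calc B * A = (B * A)ᵀ := hB4.symm
      _ = Aᵀ * Bᵀ := transpose_mul _ _
      _ = (A * C * A)ᵀ * Bᵀ := by rw [hC1]
      _ = (Aᵀ * (Cᵀ * Aᵀ)) * Bᵀ := by rw [transpose_mul, transpose_mul]
      _ = (Aᵀ * Cᵀ) * (Aᵀ * Bᵀ) := by simp only [Matrix.mul_assoc]
      _ = (C * A)ᵀ * (B * A)ᵀ := by rw [transpose_mul, transpose_mul]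
      _ = (C * A) * (B * A) := by rw [hB4, hC4]
      _ = C * ((A * B) * A) := by simp only [Matrix.mul_assoc]
      _ = C * A := by rw [hB1]
  calc B = B * A * B := hB2.symm
    _ = C * A * B := by rw [hBA]
    _ = C * (A * B) := Matrix.mul_assoc _ _ _
    _ = C * (A * C) := by rw [hAB]
    _ = C * A * C := (Matrix.mul_assoc _ _ _).symm
    _ = C := hC2

lemma mp_transpose {A B : Matrix (Fin d) (Fin d) ℝ} (hB : IsMoorePenrose A B) :
    IsMoorePenrose Aᵀ Bᵀ := by
  obtain ⟨h1, h2, h3, h4⟩ := hB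
  refine ⟨?_, ?_, ?_, ?_⟩
  · simp only [← transpose_mul]
    rw [← Matrix.mul_assoc, h1]
  · simp only [← transpose_mul]
    rw [← Matrix.mul_assoc, h2]
  · simp only [← transpose_mul]
    rw [transpose_transpose, h4]
  · simp only [← transpose_mul]
    rw [transpose_transpose, h3]

lemma mp_symm {A B : Matrix (Fin d) (Fin d) ℝ} (hA : Aᵀ = A)
    (hB : IsMoorePenrose A B) : Bᵀ = B :=
  mp_unique (hA ▸ mp_transpose hB) hB

lemma mp_proj {ι : Type*} {S : Finset ι} (x : ι → Fin d → ℝ)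
    {B : Matrix (Fin d) (Fin d) ℝ}
    (hB : IsMoorePenrose (∑ i ∈ S, vecMulVec (x i) (x i)) B)
    {j : ι} (hj : j ∈ S) :
    (∑ i ∈ S, vecMulVec (x i) (x i)).mulVec (B.mulVec (x j)) = x j := by
  set A := ∑ i ∈ S, vecMulVec (x i) (x i) with hA
  obtain ⟨h1, h2, h3, h4⟩ := hB
  set r : Fin d → ℝ := x j - A.mulVec (B.mulVec (x j)) with hr
  have key : ∀ w : Fin d → ℝ, A.mulVec w ⬝ᵥ r = 0 := by
    intro w
    have e1 : A.mulVec w ⬝ᵥ A.mulVec (B.mulVec (x j)) = A.mulVec w ⬝ᵥ x j := by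
      rw [mulVec_mulVec, dotProduct_mulVec, ← mulVec_transpose, h3, mulVec_mulVec, h1]
    rw [hr, dotProduct_sub, e1, sub_self]
  have hAsum : ∀ u : Fin d → ℝ, A.mulVec u = ∑ i ∈ S, (x i ⬝ᵥ u) • x i := by
    intro u
    rw [hA, sum_mulVec']
    exact Finset.sum_congr rfl fun i _ => vecMulVec_mulVec' _ _ _
  have hterm : ∑ i ∈ S, (x i ⬝ᵥ r) * (x i ⬝ᵥ r) = 0 := by
    have := key r
    rw [hAsum r, sum_dotProduct'] at this
    simpa only [smul_dotProduct, smul_eq_mul] using this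
  have hxjr : x j ⬝ᵥ r = 0 := by
    have h0 : ∀ i ∈ S, 0 ≤ (x i ⬝ᵥ r) * (x i ⬝ᵥ r) := fun i _ => mul_self_nonneg _
    have := (Finset.sum_eq_zero_iff_of_nonneg h0).mp hterm j hj
    exact mul_self_eq_zero.mp this
  have hrr : r ⬝ᵥ r = 0 := by
    nth_rewrite 1 [hr]
    rw [sub_dotProduct, hxjr, key (B.mulVec (x j)), sub_zero]
  have hr0 : r = 0 := dotProduct_self_eq_zero.mp hrr
  have := sub_eq_zero.mp (hr ▸ hr0)
  exact this.symm

end LooAux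

/-- the leave-one-out identity for minimal-norm least squares.  With
`w̃ = (∑ᵢ xᵢxᵢᵀ)†(∑ᵢ yᵢxᵢ)`, `w̃⁽ʲ⁾ = (∑_{i≠j} xᵢxᵢᵀ)†(∑_{i≠j} yᵢxᵢ)` and the leverage
`h_j = ⟨(∑ᵢ xᵢxᵢᵀ)† x_j, x_j⟩ ∈ [0,1]`, one has
`⟨w̃, x_j⟩ = (1 - h_j)⟨w̃⁽ʲ⁾, x_j⟩ + h_j y_j`; moreover if `x_j` is not in the span of the
other points then `h_j = 1` and `⟨w̃, x_j⟩ = y_j`. -/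
theorem stmt2 (d n : ℕ) (x : Fin (n + 1) → Fin d → ℝ) (y : Fin (n + 1) → ℝ)
    (B : Matrix (Fin d) (Fin d) ℝ)
    (hB : IsMoorePenrose (∑ i, Matrix.vecMulVec (x i) (x i)) B)
    (Bj : Fin (n + 1) → Matrix (Fin d) (Fin d) ℝ)
    (hBj : ∀ j, IsMoorePenrose
      (∑ i ∈ Finset.univ.erase j, Matrix.vecMulVec (x i) (x i)) (Bj j)) :
    ∀ j : Fin (n + 1),
      (B.mulVec (x j) ⬝ᵥ x j) ∈ Set.Icc (0 : ℝ) 1 ∧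
      B.mulVec (∑ i, y i • x i) ⬝ᵥ x j
        = (1 - B.mulVec (x j) ⬝ᵥ x j)
            * ((Bj j).mulVec (∑ i ∈ Finset.univ.erase j, y i • x i) ⬝ᵥ x j)
          + (B.mulVec (x j) ⬝ᵥ x j) * y j ∧
      (x j ∉ Submodule.span ℝ (x '' {i | i ≠ j}) →
        B.mulVec (x j) ⬝ᵥ x j = 1 ∧ B.mulVec (∑ i, y i • x i) ⬝ᵥ x j = y j) := by
  intro j
  open LooAux in
  set A := ∑ i, Matrix.vecMulVec (x i) (x i) with hA_def
  set Aj := ∑ i ∈ Finset.univ.erase j, Matrix.vecMulVec (x i) (x i) with hAj_def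
  have hAT : Aᵀ = A := by
    rw [hA_def, transpose_sum]
    exact Finset.sum_congr rfl fun i _ => by
      ext a b; simp [vecMulVec_apply, mul_comm]
  have hBT : Bᵀ = B := LooAux.mp_symm hAT hB
  set p := B.mulVec (x j) with hp
  have hproj : ∀ i : Fin (n + 1), A.mulVec (B.mulVec (x i)) = x i := fun i =>
    LooAux.mp_proj x hB (Finset.mem_univ i)
  have hApj : A.mulVec p = x j := hproj j
  have hAsum : ∀ u : Fin d → ℝ, A.mulVec u = ∑ i, (x i ⬝ᵥ u) • x i := by
    intro u
    rw [hA_def, LooAux.sum_mulVec']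
    exact Finset.sum_congr rfl fun i _ => LooAux.vecMulVec_mulVec' _ _ _
  -- h as sum of squares
  have hval : p ⬝ᵥ x j = ∑ i, (x i ⬝ᵥ p) * (x i ⬝ᵥ p) := by
    conv_lhs => rw [← hApj, hAsum p, dotProduct_comm, LooAux.sum_dotProduct']
    exact Finset.sum_congr rfl fun i _ => by
      rw [smul_dotProduct, smul_eq_mul, dotProduct_comm]
  have hgoalh : B.mulVec (x j) ⬝ᵥ x j = p ⬝ᵥ x j := rfl
  have hh0 : 0 ≤ p ⬝ᵥ x j := by
    rw [hval]
    exact Finset.sum_nonneg fun i _ => mul_self_nonneg _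
  have hhsq : (p ⬝ᵥ x j) * (p ⬝ᵥ x j) ≤ p ⬝ᵥ x j := by
    conv_rhs => rw [hval]
    have : (p ⬝ᵥ x j) * (p ⬝ᵥ x j) = (x j ⬝ᵥ p) * (x j ⬝ᵥ p) := by
      rw [dotProduct_comm]
    rw [this]
    exact Finset.single_le_sum (fun i _ => mul_self_nonneg (x i ⬝ᵥ p)) (Finset.mem_univ j)
  have hh1 : p ⬝ᵥ x j ≤ 1 := by nlinarith
  -- the main identity
  set sj := ∑ i ∈ Finset.univ.erase j, y i • x i with hsj_def
  set u := (Bj j).mulVec sj with hu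
  have hAju : Aj.mulVec u = sj := by
    rw [hu, hsj_def, LooAux.mulVec_sum', LooAux.mulVec_sum']
    refine Finset.sum_congr rfl fun i hi => ?_
    rw [mulVec_smul, mulVec_smul, LooAux.mp_proj x (hBj j) hi]
  have hsplit : A.mulVec u = sj + (x j ⬝ᵥ u) • x j := by
    have : A = Aj + Matrix.vecMulVec (x j) (x j) := by
      rw [hA_def, hAj_def, Finset.sum_erase_add _ _ (Finset.mem_univ j)]
    rw [this, add_mulVec, hAju, LooAux.vecMulVec_mulVec']
  have hsj_eq : sj = A.mulVec u - (x j ⬝ᵥ u) • x j := by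
    rw [hsplit, add_sub_cancel_right]
  have key2 : B.mulVec (A.mulVec u) ⬝ᵥ x j = u ⬝ᵥ x j := by
    rw [dotProduct_comm, dotProduct_mulVec, ← mulVec_transpose, hBT, ← hp,
      dotProduct_mulVec, ← mulVec_transpose, hAT, hApj, dotProduct_comm]
  have hBsj : B.mulVec sj ⬝ᵥ x j = (1 - p ⬝ᵥ x j) * (u ⬝ᵥ x j) := by
    rw [hsj_eq, mulVec_sub, mulVec_smul, sub_dotProduct, key2, smul_dotProduct,
      smul_eq_mul, ← hp, dotProduct_comm (x j) u]
    ring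
  have hident : B.mulVec (∑ i, y i • x i) ⬝ᵥ x j
      = (1 - p ⬝ᵥ x j) * (u ⬝ᵥ x j) + (p ⬝ᵥ x j) * y j := by
    have hsum : (∑ i, y i • x i) = sj + y j • x j := by
      rw [hsj_def, Finset.sum_erase_add _ _ (Finset.mem_univ j)]
    rw [hsum, mulVec_add, mulVec_smul, add_dotProduct, hBsj, smul_dotProduct,
      smul_eq_mul, ← hp]
    ring
  refine ⟨⟨hh0, hh1⟩, hident, ?_⟩
  intro hsp
  have hone : p ⬝ᵥ x j = 1 := by
    by_contra hne
    apply hsp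
    have hApj_split : A.mulVec p = Aj.mulVec p + (x j ⬝ᵥ p) • x j := by
      have : A = Aj + Matrix.vecMulVec (x j) (x j) := by
        rw [hA_def, hAj_def, Finset.sum_erase_add _ _ (Finset.mem_univ j)]
      rw [this, add_mulVec, LooAux.vecMulVec_mulVec']
    have hAjp : Aj.mulVec p = (1 - p ⬝ᵥ x j) • x j := by
      have := hApj_split
      rw [hApj, dotProduct_comm (x j) p] at this
      have h2 : Aj.mulVec p = x j - (p ⬝ᵥ x j) • x j := by
        rw [eq_sub_iff_add_eq, ← this]
      rw [h2, sub_smul, one_smul]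
    have hxj : x j = (1 - p ⬝ᵥ x j)⁻¹ • Aj.mulVec p := by
      rw [hAjp, smul_smul, inv_mul_cancel₀ (sub_ne_zero.mpr (Ne.symm hne)), one_smul]
    rw [hxj]
    refine Submodule.smul_mem _ _ ?_
    have : Aj.mulVec p = ∑ i ∈ Finset.univ.erase j, (x i ⬝ᵥ p) • x i := by
      rw [hAj_def, LooAux.sum_mulVec']
      exact Finset.sum_congr rfl fun i _ => LooAux.vecMulVec_mulVec' _ _ _
    rw [this]
    refine Submodule.sum_mem _ fun i hi => Submodule.smul_mem _ _ ?_
    exact Submodule.subset_span ⟨i, (Finset.mem_erase.mp hi).1, rfl⟩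
  refine ⟨hone, ?_⟩
  rw [hident, hone]
  ring
end

section
/- Fix the dimension d = 1. There exist absolute constants c > 0 and n_0 ≥ 2 such that the following holds: for any n ≥ n_0 and any m > 0, there is a distribution P = P(n) of (X,Y) on ℝ × ℝ with |Y| ≤ m almost surely, such that if ĝ is either the truncated least squares estimator ĝ_m(x) = max(-m, min(m, ŵ_erm·x)) or the Forster–Warmuth estimator ĝ_FW(x) = (1 - h_n(x))² ŵ_erm·x, computed on an i.i.d. sample (X_i,Y_i)_{i=1}^n from P, then P(R(ĝ) - inf_{g ∈ F_lin} R(g) ≥ c m²) ≥ c. -/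
open MeasureTheory ProbabilityTheory ENNReal

/-- The (population) risk of a predictor `g : ℝ → ℝ` with respect to the distribution `P`
of a random pair `(X, Y) ∈ ℝ × ℝ`: `R(g) = E[(g(X) - Y)²]`. -/
noncomputable def risk1 (P : Measure (ℝ × ℝ)) (g : ℝ → ℝ) : ℝ≥0∞ :=
  ∫⁻ p, ENNReal.ofReal ((g p.1 - p.2) ^ 2) ∂P

/-- The one-dimensional least-squares coefficient
`ŵ_erm = (∑ᵢ Xᵢ²)† (∑ᵢ YᵢXᵢ)` (the ratio when the denominator is nonzero, `0` otherwise). -/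
noncomputable def wERM {n : ℕ} (s : Fin n → ℝ × ℝ) : ℝ :=
  if (∑ i, (s i).1 ^ 2) ≠ 0 then (∑ i, (s i).2 * (s i).1) / (∑ i, (s i).1 ^ 2) else 0

/-- The one-dimensional leverage score `h_n(x) = x² / (∑ᵢ Xᵢ² + x²)`
(set to `0` when the denominator vanishes). -/
noncomputable def lev {n : ℕ} (s : Fin n → ℝ × ℝ) (x : ℝ) : ℝ :=
  if (∑ i, (s i).1 ^ 2) + x ^ 2 ≠ 0 then x ^ 2 / ((∑ i, (s i).1 ^ 2) + x ^ 2) else 0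

lemma stmt5_bern2 (x : ℝ) (hx : 0 ≤ x) : ∀ k : ℕ, 1 + k*x + ((k:ℝ)*((k:ℝ)-1)/2)*x^2 ≤ (1+x)^k := by
  intro k
  induction k with
  | zero => norm_num
  | succ k ih =>
    have hkk : (0:ℝ) ≤ (k:ℝ)*((k:ℝ)-1) := by
      rcases Nat.eq_zero_or_pos k with h|h
      · simp [h]
      · have : (1:ℝ) ≤ (k:ℝ) := by exact_mod_cast h
        nlinarith
    have h2 : (1+x)^(k+1) = (1+x)^k * (1+x) := by ring
    push_cast
    nlinarith [mul_le_mul_of_nonneg_right ih (by linarith : (0:ℝ) ≤ 1 + x),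
      mul_nonneg (mul_nonneg hkk (mul_nonneg hx hx)) hx]

lemma stmt5_pow_bound (n : ℕ) (hn : 100 ≤ n) : (1 - 1/(2*(n:ℝ)))^(n-1) ≤ 28/45 := by
  have hn' : (100:ℝ) ≤ (n:ℝ) := by exact_mod_cast hn
  have hD : (0:ℝ) < 2*(n:ℝ)-1 := by linarith
  set x : ℝ := 1/(2*(n:ℝ)-1) with hxdef
  have hx : 0 ≤ x := div_nonneg zero_le_one hD.le
  have hk : ((n-1:ℕ):ℝ) = (n:ℝ) - 1 := by
    have h1 : 1 ≤ n := by omega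
    push_cast [h1]; ring
  have hb := stmt5_bern2 x hx (n-1)
  rw [hk] at hb
  have hlb : (45:ℝ)/28 ≤ 1 + ((n:ℝ)-1)*x + (((n:ℝ)-1)*(((n:ℝ)-1)-1)/2)*x^2 := by
    have h1 : 1 + ((n:ℝ)-1)*x + (((n:ℝ)-1)*(((n:ℝ)-1)-1)/2)*x^2
        = ((2*(n:ℝ)-1)^2*2 + ((n:ℝ)-1)*(2*(n:ℝ)-1)*2 + ((n:ℝ)-1)*((n:ℝ)-2)) / (2*(2*(n:ℝ)-1)^2) := by
      have key : ∀ D N : ℝ, D ≠ 0 → 1 + (N-1)*(1/D) + ((N-1)*((N-1)-1)/2)*(1/D)^2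
          = (D^2*2 + (N-1)*D*2 + (N-1)*(N-2))/(2*D^2) := by
        intro D N hD0; field_simp; ring
      rw [hxdef]; exact key _ _ hD.ne'
    rw [h1, le_div_iff₀ (by positivity)]
    nlinarith
  have h45 : (45:ℝ)/28 ≤ (1+x)^(n-1) := le_trans hlb hb
  have h1x : 1 + x = 2*(n:ℝ)/(2*(n:ℝ)-1) := by
    rw [hxdef, eq_div_iff hD.ne', add_mul, div_mul_cancel₀ _ hD.ne']; ring
  have hr : (1 - 1/(2*(n:ℝ))) = (1+x)⁻¹ := by
    have hn0 : (n:ℝ) ≠ 0 := by positivity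
    rw [h1x, inv_div, eq_div_iff (by positivity : (2*(n:ℝ)) ≠ 0)]
    field_simp
  rw [hr, inv_pow, show (28:ℝ)/45 = (45/28)⁻¹ by norm_num]
  exact inv_anti₀ (by norm_num) h45

lemma stmt5_ineq2 (nr Kr m : ℝ) (h2 : 2 ≤ Kr) (hK : Kr ≤ nr) (hm : 0 < m) :
    (nr - Kr)*m ≤ m/3 * (Kr*nr + (nr - Kr)) := by
  nlinarith [mul_nonneg hm.le (by nlinarith : (0:ℝ) ≤ Kr*nr + 2*Kr - 2*nr)]


set_option maxHeartbeats 1000000 in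
/-- in dimension `d = 1`, there are absolute constants `c > 0`, `n₀ ≥ 2` such that
for every `n ≥ n₀` and `m > 0` there is a distribution `P` with `|Y| ≤ m` a.s. for which both
the truncated least squares estimator and the Forster–Warmuth estimator have excess risk at
least `c m²` with probability at least `c`. -/
theorem stmt5 : ∃ c > (0 : ℝ), ∃ n₀ : ℕ, 2 ≤ n₀ ∧
    ∀ n : ℕ, n₀ ≤ n → ∀ m : ℝ, 0 < m →
      ∃ P : Measure (ℝ × ℝ), IsProbabilityMeasure P ∧ (∀ᵐ p ∂P, |p.2| ≤ m) ∧
        ENNReal.ofReal c ≤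
          (Measure.pi fun _ : Fin n => P)
            {s | (⨅ w : ℝ, risk1 P fun x => w * x) + ENNReal.ofReal (c * m ^ 2)
                  ≤ risk1 P fun x => max (-m) (min m (wERM s * x))} ∧
        ENNReal.ofReal c ≤
          (Measure.pi fun _ : Fin n => P)
            {s | (⨅ w : ℝ, risk1 P fun x => w * x) + ENNReal.ofReal (c * m ^ 2)
                  ≤ risk1 P fun x => (1 - lev s x) ^ 2 * (wERM s * x)} := by
  classical
  refine ⟨1/15, by norm_num, 100, by norm_num, ?_⟩
  intro n hn m hm
  have hn' : (100:ℝ) ≤ (n:ℝ) := by exact_mod_cast hn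
  have hn0 : (0:ℝ) < n := by linarith
  set r : ℝ := 1 - 1/(2*(n:ℝ)) with hrdef
  have hp0 : (0:ℝ) < 1/(2*(n:ℝ)) := by positivity
  have hpsmall : 1/(2*(n:ℝ)) ≤ 1/200 := by
    rw [div_le_div_iff₀ (by linarith) (by norm_num)]; linarith
  have hr0 : (0:ℝ) ≤ r := by rw [hrdef]; linarith
  have hr1 : r ≤ 1 := by rw [hrdef]; linarith
  set B : ℝ := Real.sqrt n with hBdef
  have hB2 : B^2 = n := Real.sq_sqrt hn0.le
  set p' : ℝ≥0∞ := ENNReal.ofReal (1/(2*(n:ℝ))) with hp'def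
  set q' : ℝ≥0∞ := ENNReal.ofReal r with hq'def
  set Hpt : ℝ × ℝ := (B, 0) with hHdef
  set Lpt : ℝ × ℝ := ((1:ℝ), m) with hLdef
  have hLH : Lpt ≠ Hpt := fun h =>
    hm.ne' (by simpa [hLdef, hHdef] using congrArg Prod.snd h)
  set P : Measure (ℝ × ℝ) := q' • Measure.dirac Lpt + p' • Measure.dirac Hpt with hPdef
  have hq'p' : q' + p' = 1 := by
    rw [hq'def, hp'def, ← ENNReal.ofReal_add hr0 hp0.le, hrdef]
    norm_num
  have hPprob : IsProbabilityMeasure P := by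
    constructor
    simp only [hPdef, Measure.add_apply, Measure.smul_apply, smul_eq_mul, measure_univ, mul_one]
    exact hq'p'
  haveI := hPprob
  -- risk formula
  have hrisk : ∀ g : ℝ → ℝ, risk1 P g
      = q' * ENNReal.ofReal ((g 1 - m)^2) + p' * ENNReal.ofReal ((g B - 0)^2) := by
    intro g
    simp only [risk1, hPdef, lintegral_add_measure, lintegral_smul_measure,
      lintegral_dirac, hLdef, hHdef, smul_eq_mul]
  -- |Y| ≤ m a.s.
  have hae : ∀ᵐ p ∂P, |p.2| ≤ m := by
    rw [ae_iff]
    have h1 : Lpt ∉ {p : ℝ × ℝ | ¬ |p.2| ≤ m} := by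
      simp [hLdef, abs_of_pos hm]
    have h2 : Hpt ∉ {p : ℝ × ℝ | ¬ |p.2| ≤ m} := by
      simp [hHdef, hm.le]
    simp only [hPdef, Measure.add_apply, Measure.smul_apply, smul_eq_mul,
      Measure.dirac_apply, Set.indicator_of_notMem h1, Set.indicator_of_notMem h2]
    simp
  -- infimum upper bound
  have hinf : (⨅ w : ℝ, risk1 P fun x => w * x) ≤ ENNReal.ofReal (m^2/3) := by
    refine le_trans (iInf_le _ (2*m/3)) ?_
    rw [hrisk]
    have e1 : (2*m/3*1 - m)^2 = m^2/9 := by ring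
    have e2 : (2*m/3*B - 0)^2 = 4*m^2/9*(n:ℝ) := by
      have : (2*m/3*B - 0)^2 = (4*m^2/9)*B^2 := by ring
      rw [this, hB2]
    rw [e1, e2]
    have h3 : p' * ENNReal.ofReal (4*m^2/9*(n:ℝ)) = ENNReal.ofReal (2*m^2/9) := by
      rw [hp'def, ← ENNReal.ofReal_mul hp0.le]
      congr 1
      field_simp
      ring
    rw [h3]
    have h4 : q' * ENNReal.ofReal (m^2/9) ≤ ENNReal.ofReal (m^2/9) := by
      apply mul_le_of_le_one_left (by positivity)
      rw [hq'def, ← ENNReal.ofReal_one]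
      exact ENNReal.ofReal_le_ofReal hr1
    calc q' * ENNReal.ofReal (m^2/9) + ENNReal.ofReal (2*m^2/9)
        ≤ ENNReal.ofReal (m^2/9) + ENNReal.ofReal (2*m^2/9) := add_le_add_left h4 _
      _ = ENNReal.ofReal (m^2/3) := by
          rw [← ENNReal.ofReal_add (by positivity) (by positivity)]
          congr 1; ring
  -- the event
  set A : Set (Fin n → ℝ × ℝ) :=
    {s | (∀ i, s i = Lpt ∨ s i = Hpt) ∧ 2 ≤ (Finset.univ.filter (fun i => s i = Hpt)).card}
    with hAdef
  set μ : Measure (Fin n → ℝ × ℝ) := Measure.pi (fun _ : Fin n => P) with hμdef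
  -- key risk lower bound on A
  have hkey : ∀ s ∈ A, ∀ t : ℝ, 0 ≤ t → t ≤ m/3 →
      (⨅ w : ℝ, risk1 P fun x => w * x) + ENNReal.ofReal ((1/15) * m^2)
        ≤ q' * ENNReal.ofReal ((t - m)^2) := by
    intro s _ t ht0 ht1
    have hq : (2/5)*m^2 ≤ r * (t - m)^2 := by
      have hmt : 2*m/3 ≤ m - t := by linarith
      have h2 : (2*m/3)^2 ≤ (m-t)^2 := by nlinarith
      have hrlb : (199:ℝ)/200 ≤ r := by rw [hrdef]; linarith
      nlinarith [sq_nonneg (m-t)]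
    calc (⨅ w : ℝ, risk1 P fun x => w * x) + ENNReal.ofReal ((1/15) * m^2)
        ≤ ENNReal.ofReal (m^2/3) + ENNReal.ofReal ((1/15) * m^2) := add_le_add_left hinf _
      _ = ENNReal.ofReal ((2/5)*m^2) := by
          rw [← ENNReal.ofReal_add (by positivity) (by positivity)]
          congr 1; ring
      _ ≤ ENNReal.ofReal (r * (t-m)^2) := ENNReal.ofReal_le_ofReal hq
      _ = q' * ENNReal.ofReal ((t-m)^2) := by
          rw [hq'def, ENNReal.ofReal_mul hr0]
  -- structure of samples in A
  have hstruct : ∀ s ∈ A, 0 ≤ wERM s ∧ wERM s ≤ m/3 ∧ (∑ i, (s i).1 ^ 2) ≠ 0 ∧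
      0 < (∑ i, (s i).1 ^ 2) := by
    intro s hs
    obtain ⟨hsT, hsK⟩ := hs
    set K : ℕ := (Finset.univ.filter (fun i => s i = Hpt)).card with hKdef
    have hKn : K ≤ n := by
      rw [hKdef]
      calc (Finset.univ.filter (fun i => s i = Hpt)).card
          ≤ Finset.univ.card := Finset.card_filter_le _ _
        _ = n := by simp
    have hK2 : 2 ≤ K := hsK
    have hK2' : (2:ℝ) ≤ K := by exact_mod_cast hK2
    have hKn' : (K:ℝ) ≤ n := by exact_mod_cast hKn
    have hs1 : ∀ i, (s i).1^2 = (if s i = Hpt then (n:ℝ) else 1) := by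
      intro i
      rcases hsT i with h|h
      · rw [if_neg (h ▸ hLH), h, hLdef]; norm_num
      · rw [if_pos h, h, hHdef]; exact hB2
    have hs2 : ∀ i, (s i).2 * (s i).1 = (if s i = Hpt then (0:ℝ) else m) := by
      intro i
      rcases hsT i with h|h
      · rw [if_neg (h ▸ hLH), h, hLdef]; norm_num
      · rw [if_pos h, h, hHdef]; norm_num
    have hsum1 : (∑ i, (s i).1 ^ 2) = (K:ℝ)*n + ((n:ℝ) - K) := by
      rw [Finset.sum_congr rfl (fun i _ => hs1 i), Finset.sum_ite, Finset.sum_const,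
        Finset.sum_const]
      have hcards : (Finset.univ.filter (fun i => ¬ s i = Hpt)).card = n - K := by
        have := Finset.card_filter_add_card_filter_not
          (s := (Finset.univ : Finset (Fin n))) (p := fun i => s i = Hpt)
        simp only [Finset.card_univ, Fintype.card_fin] at this
        omega
      rw [hcards]
      have : ((n - K : ℕ) : ℝ) = (n:ℝ) - K := by
        push_cast [hKn]; ring
      simp [nsmul_eq_mul, this, ← hKdef]
    have hsum2 : (∑ i, (s i).2 * (s i).1) = ((n:ℝ) - K)*m := by
      rw [Finset.sum_congr rfl (fun i _ => hs2 i), Finset.sum_ite, Finset.sum_const,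
        Finset.sum_const]
      have hcards : (Finset.univ.filter (fun i => ¬ s i = Hpt)).card = n - K := by
        have := Finset.card_filter_add_card_filter_not
          (s := (Finset.univ : Finset (Fin n))) (p := fun i => s i = Hpt)
        simp only [Finset.card_univ, Fintype.card_fin] at this
        omega
      rw [hcards]
      have : ((n - K : ℕ) : ℝ) = (n:ℝ) - K := by
        push_cast [hKn]; ring
      simp [nsmul_eq_mul, this]
    have hDpos : (0:ℝ) < (K:ℝ)*n + ((n:ℝ) - K) := by nlinarith
    have hne : (∑ i, (s i).1 ^ 2) ≠ 0 := by rw [hsum1]; exact hDpos.ne'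
    have hw : wERM s = ((n:ℝ) - K)*m / ((K:ℝ)*n + ((n:ℝ) - K)) := by
      rw [wERM, if_pos hne, hsum1, hsum2]
    refine ⟨?_, ?_, hne, by rw [hsum1]; exact hDpos⟩
    · rw [hw]
      apply div_nonneg _ hDpos.le
      nlinarith
    · rw [hw, div_le_iff₀ hDpos]
      exact stmt5_ineq2 _ _ _ hK2' hKn' hm
  -- membership of A in both target sets
  have hmemTLS : A ⊆ {s | (⨅ w : ℝ, risk1 P fun x => w * x) + ENNReal.ofReal ((1/15) * m ^ 2)
      ≤ risk1 P fun x => max (-m) (min m (wERM s * x))} := by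
    intro s hs
    obtain ⟨hw0, hwub, -, -⟩ := hstruct s hs
    have hg1 : max (-m) (min m (wERM s * 1)) = wERM s := by
      rw [mul_one, min_eq_right (by linarith), max_eq_right (by linarith)]
    have hchain := hkey s hs (wERM s) hw0 hwub
    simp only [Set.mem_setOf_eq]
    calc (⨅ w : ℝ, risk1 P fun x => w * x) + ENNReal.ofReal (1/15 * m ^ 2)
        ≤ q' * ENNReal.ofReal ((wERM s - m)^2) := hchain
      _ ≤ _ := by
          rw [hrisk]
          rw [hg1]
          exact le_self_add
  have hmemFW : A ⊆ {s | (⨅ w : ℝ, risk1 P fun x => w * x) + ENNReal.ofReal ((1/15) * m ^ 2)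
      ≤ risk1 P fun x => (1 - lev s x) ^ 2 * (wERM s * x)} := by
    intro s hs
    obtain ⟨hw0, hwub, -, hSpos⟩ := hstruct s hs
    have hden : (∑ i, (s i).1 ^ 2) + (1:ℝ)^2 ≠ 0 := by nlinarith
    have hd1 : (0:ℝ) < (∑ i, (s i).1 ^ 2) + 1 := by nlinarith
    have hlev : lev s 1 = 1 / ((∑ i, (s i).1 ^ 2) + 1) := by
      rw [lev, if_pos hden]; norm_num
    have hlev0 : 0 ≤ lev s 1 := by
      rw [hlev]; exact div_nonneg zero_le_one hd1.le
    have hlev1 : lev s 1 ≤ 1 := by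
      rw [hlev, div_le_one hd1]; nlinarith
    have hsq1 : (1 - lev s 1)^2 ≤ 1 := by nlinarith
    have ht0 : 0 ≤ (1 - lev s 1)^2 * (wERM s * 1) :=
      mul_nonneg (sq_nonneg _) (by rw [mul_one]; exact hw0)
    have ht1 : (1 - lev s 1)^2 * (wERM s * 1) ≤ m/3 := by
      rw [mul_one]
      calc (1 - lev s 1)^2 * wERM s ≤ 1 * wERM s := mul_le_mul_of_nonneg_right hsq1 hw0
        _ = wERM s := one_mul _
        _ ≤ m/3 := hwub
    have hchain := hkey s hs _ ht0 ht1
    simp only [Set.mem_setOf_eq]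
    calc (⨅ w : ℝ, risk1 P fun x => w * x) + ENNReal.ofReal (1/15 * m ^ 2)
        ≤ q' * ENNReal.ofReal (((1 - lev s 1)^2 * (wERM s * 1) - m)^2) := hchain
      _ ≤ _ := by rw [hrisk]; exact le_self_add
  -- probability part
  set T : Set (ℝ × ℝ) := {Lpt, Hpt} with hTdef
  have hTmeas : MeasurableSet T := (measurableSet_singleton Hpt).insert Lpt
  have hPT : P T = 1 := by
    have h1 : Lpt ∈ T := Set.mem_insert _ _
    have h2 : Hpt ∈ T := Set.mem_insert_of_mem _ rfl
    simp only [hPdef, Measure.add_apply, Measure.smul_apply, smul_eq_mul,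
      Measure.dirac_apply, Set.indicator_of_mem h1, Set.indicator_of_mem h2]
    simpa using hq'p'
  have hPTc : P Tᶜ = 0 := by
    rw [measure_compl hTmeas (measure_ne_top _ _), hPT, measure_univ, tsub_self]
  have hPH : P {Hpt} = p' := by
    have h1 : Lpt ∉ ({Hpt} : Set (ℝ × ℝ)) := by simpa using hLH
    have h2 : Hpt ∈ ({Hpt} : Set (ℝ × ℝ)) := rfl
    simp only [hPdef, Measure.add_apply, Measure.smul_apply, smul_eq_mul,
      Measure.dirac_apply, Set.indicator_of_notMem h1, Set.indicator_of_mem h2]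
    simp
  have hPHc : P {Hpt}ᶜ = q' := by
    rw [measure_compl (measurableSet_singleton _) (measure_ne_top _ _), hPH, measure_univ,
      hq'def, hp'def, hrdef, ← ENNReal.ofReal_one, ← ENNReal.ofReal_sub _ hp0.le]
  haveI : IsProbabilityMeasure μ := by rw [hμdef]; infer_instance
  have hEnone : μ (Set.pi Set.univ (fun _ : Fin n => ({Hpt}ᶜ : Set (ℝ × ℝ)))) = q' ^ n := by
    rw [hμdef, Measure.pi_pi]
    simp [hPHc]
  have hEi : ∀ i : Fin n,
      μ (Set.pi Set.univ (fun j => if j = i then ({Hpt} : Set (ℝ × ℝ)) else {Hpt}ᶜ))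
        = p' * q' ^ (n - 1) := by
    intro i
    rw [hμdef, Measure.pi_pi, ← Finset.mul_prod_erase Finset.univ _ (Finset.mem_univ i)]
    have h1 : P (if i = i then ({Hpt} : Set (ℝ × ℝ)) else {Hpt}ᶜ) = p' := by
      rw [if_pos rfl, hPH]
    have h2 : ∀ j ∈ Finset.univ.erase i,
        P (if j = i then ({Hpt} : Set (ℝ × ℝ)) else {Hpt}ᶜ) = q' := by
      intro j hj
      rw [if_neg (Finset.ne_of_mem_erase hj), hPHc]
    rw [h1, Finset.prod_congr rfl h2, Finset.prod_const, Finset.card_erase_of_mem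
      (Finset.mem_univ i)]
    simp
  have hGi : ∀ i : Fin n, μ {s : Fin n → ℝ × ℝ | s i ∈ Tᶜ} = 0 := by
    intro i
    have heq : {s : Fin n → ℝ × ℝ | s i ∈ Tᶜ}
        = Set.pi Set.univ (fun j => if j = i then Tᶜ else Set.univ) := by
      ext s
      simp only [Set.mem_setOf_eq, Set.mem_pi, Set.mem_univ, forall_true_left]
      constructor
      · intro h j
        by_cases hj : j = i
        · subst hj; rw [if_pos rfl]; exact h
        · rw [if_neg hj]; trivial
      · intro h
        have := h i
        rwa [if_pos rfl] at this
    rw [heq, hμdef, Measure.pi_pi]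
    apply Finset.prod_eq_zero (Finset.mem_univ i)
    rw [if_pos rfl, hPTc]
  have hsub : Aᶜ ⊆ (⋃ i, {s : Fin n → ℝ × ℝ | s i ∈ Tᶜ}) ∪
      ((Set.pi Set.univ (fun _ : Fin n => ({Hpt}ᶜ : Set (ℝ × ℝ)))) ∪
        ⋃ i, Set.pi Set.univ (fun j => if j = i then ({Hpt} : Set (ℝ × ℝ)) else {Hpt}ᶜ)) := by
    intro s hs
    by_cases hG : ∀ i, s i = Lpt ∨ s i = Hpt
    · right
      have hcard : (Finset.univ.filter (fun i => s i = Hpt)).card ≤ 1 := by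
        by_contra hc
        push_neg at hc
        exact hs ⟨hG, hc⟩
      by_cases hex : ∃ i, s i = Hpt
      · obtain ⟨i, hi⟩ := hex
        right
        refine Set.mem_iUnion.mpr ⟨i, ?_⟩
        rw [Set.mem_univ_pi]
        intro j
        by_cases hj : j = i
        · rw [if_pos hj, hj]; exact hi
        · rw [if_neg hj]
          intro hsj
          exact hj (Finset.card_le_one.mp hcard j
            (Finset.mem_filter.mpr ⟨Finset.mem_univ j, hsj⟩) i
            (Finset.mem_filter.mpr ⟨Finset.mem_univ i, hi⟩))
      · left
        push_neg at hex
        rw [Set.mem_univ_pi]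
        intro j
        exact hex j
    · left
      push_neg at hG
      obtain ⟨i, hi1, hi2⟩ := hG
      refine Set.mem_iUnion.mpr ⟨i, ?_⟩
      simp only [Set.mem_compl_iff, hTdef, Set.mem_insert_iff, Set.mem_singleton_iff]
      tauto
  have hAc : μ Aᶜ ≤ ENNReal.ofReal (14/15) := by
    have hb1 : μ Aᶜ ≤ μ (⋃ i, {s : Fin n → ℝ × ℝ | s i ∈ Tᶜ}) +
        (μ (Set.pi Set.univ (fun _ : Fin n => ({Hpt}ᶜ : Set (ℝ × ℝ)))) +
          μ (⋃ i, Set.pi Set.univ (fun j => if j = i then ({Hpt} : Set (ℝ × ℝ)) else {Hpt}ᶜ))) :=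
      le_trans (measure_mono hsub) (le_trans (measure_union_le _ _)
        (add_le_add_right (measure_union_le _ _) _))
    have hU1 : μ (⋃ i, {s : Fin n → ℝ × ℝ | s i ∈ Tᶜ}) = 0 := by
      refine le_antisymm (le_trans (measure_iUnion_le _) ?_) (by positivity)
      rw [tsum_congr hGi]
      simp
    have hU2 : μ (⋃ i, Set.pi Set.univ
        (fun j => if j = i then ({Hpt} : Set (ℝ × ℝ)) else {Hpt}ᶜ))
          ≤ (n : ℝ≥0∞) * (p' * q' ^ (n - 1)) := by
      refine le_trans (measure_iUnion_le _) ?_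
      rw [tsum_fintype]
      rw [Finset.sum_congr rfl (fun i _ => hEi i), Finset.sum_const, Finset.card_univ]
      simp [nsmul_eq_mul]
    have hnum : q' ^ n + (n : ℝ≥0∞) * (p' * q' ^ (n - 1)) ≤ ENNReal.ofReal (14/15) := by
      have e1 : q' ^ n = ENNReal.ofReal (r ^ n) := by
        rw [hq'def, ← ENNReal.ofReal_pow hr0]
      have e2 : p' * q' ^ (n - 1) = ENNReal.ofReal ((1/(2*(n:ℝ))) * r ^ (n - 1)) := by
        rw [hp'def, hq'def, ← ENNReal.ofReal_pow hr0, ← ENNReal.ofReal_mul hp0.le]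
      have e3 : (n : ℝ≥0∞) = ENNReal.ofReal (n : ℝ) := by
        simp [ENNReal.ofReal_natCast]
      rw [e1, e2, e3, ← ENNReal.ofReal_mul (by positivity),
        ← ENNReal.ofReal_add (by positivity) (by positivity)]
      apply ENNReal.ofReal_le_ofReal
      have hrn : r ^ n = r ^ (n - 1) * r := by
        rw [← pow_succ]
        congr 1
        omega
      have hpow := stmt5_pow_bound n hn
      have hrp : 0 ≤ r ^ (n - 1) := pow_nonneg hr0 _
      have hhalf : (n:ℝ) * ((1/(2*(n:ℝ))) * r ^ (n - 1)) = (1/2) * r ^ (n - 1) := by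
        field_simp
      rw [hrn, hhalf]
      calc r ^ (n-1) * r + 1/2 * r ^ (n-1) = r ^ (n-1) * (r + 1/2) := by ring
        _ ≤ (28/45) * (3/2) := by
            apply mul_le_mul hpow (by linarith) (by linarith) (by norm_num)
        _ ≤ 14/15 := by norm_num
    calc μ Aᶜ ≤ 0 + (q' ^ n + (n : ℝ≥0∞) * (p' * q' ^ (n - 1))) := by
          rw [hU1] at hb1
          refine le_trans hb1 ?_
          rw [hEnone]
          exact add_le_add_right (add_le_add_right hU2 _) _
      _ ≤ ENNReal.ofReal (14/15) := by rw [zero_add]; exact hnum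
  have hA : ENNReal.ofReal ((1:ℝ)/15) ≤ μ A := by
    have hsplit : (1:ℝ≥0∞) ≤ μ A + μ Aᶜ := by
      calc (1:ℝ≥0∞) = μ (A ∪ Aᶜ) := by rw [Set.union_compl_self]; exact measure_univ.symm
        _ ≤ μ A + μ Aᶜ := measure_union_le _ _
    have h1 : (1:ℝ≥0∞) ≤ μ A + ENNReal.ofReal (14/15) :=
      le_trans hsplit (add_le_add_right hAc _)
    have heq : ENNReal.ofReal ((1:ℝ)/15) = 1 - ENNReal.ofReal (14/15) := by
      rw [← ENNReal.ofReal_one, ← ENNReal.ofReal_sub _ (by norm_num : (0:ℝ) ≤ 14/15)]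
      norm_num
    rw [heq]
    exact tsub_le_iff_right.mpr h1
  exact ⟨P, hPprob, hae, le_trans hA (measure_mono hmemTLS),
    le_trans hA (measure_mono hmemFW)⟩
end

section
/- Let n ≥ 2 and let (X,Y) have the distribution P(n) on ℝ × ℝ with (X,Y) = (1,1) with probability 1 - 1/n and (X,Y) = (√n, 0) with probability 1/n. Then for every w ∈ ℝ, R(g_w) = (1 - 1/n)(w - 1)² + w², and inf_{w ∈ ℝ} R(g_w) = (1 - 1/n)/(2 - 1/n) ≤ 1/2. -/
open MeasureTheory ProbabilityTheory ENNReal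

/-- The distribution `P(n)` on `ℝ × ℝ`: `(X,Y) = (1,1)` with probability `1 - 1/n`
and `(X,Y) = (√n, 0)` with probability `1/n`. -/
noncomputable def Pdist (n : ℕ) : Measure (ℝ × ℝ) :=
  ENNReal.ofReal (1 - 1 / n) • Measure.dirac ((1 : ℝ), (1 : ℝ))
    + ENNReal.ofReal (1 / n) • Measure.dirac (Real.sqrt n, (0 : ℝ))

/-- for the distribution `P(n)`, every linear predictor `g_w(x) = w x` has risk
`(1 - 1/n)(w-1)² + w²`, and the infimum over `w` equals `(1 - 1/n)/(2 - 1/n) ≤ 1/2`. -/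
theorem stmt6 (n : ℕ) (hn : 2 ≤ n) :
    (∀ w : ℝ, risk1 (Pdist n) (fun x => w * x)
        = ENNReal.ofReal ((1 - 1 / n) * (w - 1) ^ 2 + w ^ 2)) ∧
    (⨅ w : ℝ, risk1 (Pdist n) fun x => w * x)
        = ENNReal.ofReal ((1 - 1 / n) / (2 - 1 / n)) ∧
    ENNReal.ofReal ((1 - 1 / n) / (2 - 1 / n)) ≤ ENNReal.ofReal (1 / 2) := by
  have hn0 : (0:ℝ) < n := by positivity
  have hmeas : ∀ w : ℝ, Measurable fun p : ℝ × ℝ =>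
      ENNReal.ofReal (((fun x => w * x) p.1 - p.2) ^ 2) := by
    intro w
    exact (Measurable.pow ((measurable_fst.const_mul w).sub measurable_snd)
      measurable_const).ennreal_ofReal
  have ha0 : (0:ℝ) ≤ 1 - 1 / n := by
    rw [sub_nonneg, div_le_one hn0]
    exact_mod_cast le_trans (by norm_num) hn
  have key : ∀ w : ℝ, risk1 (Pdist n) (fun x => w * x)
      = ENNReal.ofReal ((1 - 1 / n) * (w - 1) ^ 2 + w ^ 2) := by
    intro w
    rw [risk1, Pdist, lintegral_add_measure, lintegral_smul_measure,
      lintegral_smul_measure, lintegral_dirac _ _, lintegral_dirac _ _]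
    simp only [smul_eq_mul]
    rw [← ENNReal.ofReal_mul ha0, ← ENNReal.ofReal_mul (by positivity),
      ← ENNReal.ofReal_add (by positivity) (by positivity)]
    congr 1
    have hs : (w * Real.sqrt n - 0) ^ 2 = w ^ 2 * n := by
      rw [sub_zero, mul_pow, Real.sq_sqrt hn0.le]
    rw [hs]
    field_simp
  refine ⟨key, ?_, ?_⟩
  · set a : ℝ := 1 - 1 / n with ha
    have ha1 : a + 1 > 0 := by linarith
    have h2 : (2:ℝ) - 1/n = a + 1 := by rw [ha]; ring
    rw [h2]
    apply le_antisymm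
    · refine iInf_le_of_le (a / (a + 1)) ?_
      rw [key]
      apply ENNReal.ofReal_le_ofReal
      have : a * (a / (a + 1) - 1) ^ 2 + (a / (a + 1)) ^ 2 = a / (a + 1) := by
        field_simp
        ring
      rw [this]
    · refine le_iInf fun w => ?_
      rw [key]
      apply ENNReal.ofReal_le_ofReal
      rw [div_le_iff₀ ha1]
      nlinarith [sq_nonneg ((a + 1) * w - a), sq_nonneg w]
  · apply ENNReal.ofReal_le_ofReal
    rw [div_le_div_iff₀ (by linarith) (by norm_num)]
    have ht : (0:ℝ) ≤ 1/n := by positivity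
    linarith
end

section
/- Let n ≥ 16 and let (X,Y) have the distribution P(n) on ℝ × ℝ with (X,Y) = (1,1) with probability 1 - 1/n and (X,Y) = (√n, 0) with probability 1/n. Let K ≥ 4 be an integer and let g : ℝ → ℝ be any measurable function with g(1) ≤ 1/(K+1). Then R(g) ≥ (1 - 1/n)(K/(K+1))², and consequently R(g) - inf_{w ∈ ℝ} R(g_w) ≥ 1/10. -/
open MeasureTheory ProbabilityTheory ENNReal

lemma risk1_eval (n : ℕ) (g : ℝ → ℝ) (hg : Measurable g) :
    risk1 (Pdist n) g = ENNReal.ofReal (1 - 1/(n:ℝ)) * ENNReal.ofReal ((g 1 - 1)^2)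
      + ENNReal.ofReal (1/(n:ℝ)) * ENNReal.ofReal ((g (Real.sqrt n))^2) := by
  have hm : Measurable fun p : ℝ × ℝ => ENNReal.ofReal ((g p.1 - p.2)^2) :=
    ENNReal.measurable_ofReal.comp (((hg.comp measurable_fst).sub measurable_snd).pow_const 2)
  unfold risk1 Pdist
  rw [lintegral_add_measure, lintegral_smul_measure, lintegral_smul_measure,
    lintegral_dirac' _ hm, lintegral_dirac' _ hm]
  simp

/-- for `n ≥ 16`, if `g` is measurable with `g(1) ≤ 1/(K+1)` for an integer
`K ≥ 4`, then `R(g) ≥ (1 - 1/n)(K/(K+1))²`, and consequently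
`R(g) - inf_w R(g_w) ≥ 1/10` for the distribution `P(n)`. -/
theorem stmt8 (n : ℕ) (hn : 16 ≤ n) (K : ℕ) (hK : 4 ≤ K)
    (g : ℝ → ℝ) (hg : Measurable g) (hg1 : g 1 ≤ 1 / ((K : ℝ) + 1)) :
    ENNReal.ofReal ((1 - 1 / n) * ((K : ℝ) / ((K : ℝ) + 1)) ^ 2) ≤ risk1 (Pdist n) g ∧
    (⨅ w : ℝ, risk1 (Pdist n) fun x => w * x) + ENNReal.ofReal (1 / 10)
      ≤ risk1 (Pdist n) g := by
  have hn0 : (0:ℝ) < n := by positivity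
  have hnn : (16:ℝ) ≤ n := by exact_mod_cast hn
  have ha : (15/16 : ℝ) ≤ 1 - 1/(n:ℝ) := by
    have : 1/(n:ℝ) ≤ 1/16 := by
      apply div_le_div_of_nonneg_left (by norm_num) (by norm_num) hnn
    linarith
  have ha0 : (0:ℝ) ≤ 1 - 1/(n:ℝ) := by linarith
  have hK1 : (0:ℝ) < (K:ℝ) + 1 := by positivity
  have hKK : (4:ℝ) ≤ K := by exact_mod_cast hK
  have hc : (4/5 : ℝ) ≤ (K:ℝ)/((K:ℝ)+1) := by
    rw [le_div_iff₀ hK1]; linarith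
  have hc0 : (0:ℝ) ≤ (K:ℝ)/((K:ℝ)+1) := by positivity
  -- key first inequality
  have hd : (K:ℝ)/((K:ℝ)+1) ≤ 1 - g 1 := by
    have h : (K:ℝ)/((K:ℝ)+1) = 1 - 1/((K:ℝ)+1) := by field_simp; ring
    rw [h]; linarith
  have hsq : ((K:ℝ)/((K:ℝ)+1))^2 ≤ (g 1 - 1)^2 := by
    have := pow_le_pow_left₀ hc0 hd 2
    calc ((K:ℝ)/((K:ℝ)+1))^2 ≤ (1 - g 1)^2 := this
      _ = (g 1 - 1)^2 := by ring
  have hfirst : ENNReal.ofReal ((1 - 1 / n) * ((K : ℝ) / ((K : ℝ) + 1)) ^ 2)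
      ≤ risk1 (Pdist n) g := by
    rw [risk1_eval n g hg, ENNReal.ofReal_mul ha0]
    exact le_trans (mul_le_mul_right (ENNReal.ofReal_le_ofReal hsq) _) le_self_add
  refine ⟨hfirst, ?_⟩
  -- upper bound the infimum by the risk at w = 1/2
  have hhalf : risk1 (Pdist n) (fun x => (1/2 : ℝ) * x)
      = ENNReal.ofReal (1 - 1/(n:ℝ)) * ENNReal.ofReal (1/4)
        + ENNReal.ofReal (1/(n:ℝ)) * ENNReal.ofReal ((n:ℝ)/4) := by
    have hm' : Measurable fun x : ℝ => (1/2 : ℝ) * x := by fun_prop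
    rw [risk1_eval n (fun x => (1/2 : ℝ) * x) hm']
    congr 2
    · norm_num
    · have : ((1/2 : ℝ) * Real.sqrt n)^2 = (1/4) * (Real.sqrt n)^2 := by ring
      rw [this, Real.sq_sqrt (le_of_lt hn0)]; ring
  have hinf : (⨅ w : ℝ, risk1 (Pdist n) fun x => w * x)
      ≤ risk1 (Pdist n) (fun x => (1/2 : ℝ) * x) := iInf_le _ (1/2 : ℝ)
  have hcomb : risk1 (Pdist n) (fun x => (1/2 : ℝ) * x) + ENNReal.ofReal (1/10)
      = ENNReal.ofReal ((1 - 1/(n:ℝ)) * (1/4) + (1/(n:ℝ)) * ((n:ℝ)/4) + 1/10) := by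
    rw [hhalf, ← ENNReal.ofReal_mul ha0, ← ENNReal.ofReal_mul (by positivity),
      ← ENNReal.ofReal_add (mul_nonneg ha0 (by norm_num)) (by positivity),
      ← ENNReal.ofReal_add (add_nonneg (mul_nonneg ha0 (by norm_num)) (by positivity)) (by norm_num)]
  have hreal : (1 - 1/(n:ℝ)) * (1/4) + (1/(n:ℝ)) * ((n:ℝ)/4) + 1/10
      ≤ (1 - 1 / n) * ((K : ℝ) / ((K : ℝ) + 1)) ^ 2 := by
    have h1 : (1/(n:ℝ)) * ((n:ℝ)/4) = 1/4 := by field_simp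
    have h2 : (1 - 1/(n:ℝ)) * (16/25) ≤ (1 - 1/(n:ℝ)) * ((K:ℝ)/((K:ℝ)+1))^2 := by
      apply mul_le_mul_of_nonneg_left _ ha0
      nlinarith
    rw [h1]; nlinarith
  calc (⨅ w : ℝ, risk1 (Pdist n) fun x => w * x) + ENNReal.ofReal (1/10)
      ≤ risk1 (Pdist n) (fun x => (1/2 : ℝ) * x) + ENNReal.ofReal (1/10) :=
        add_le_add_left hinf _
    _ = ENNReal.ofReal ((1 - 1/(n:ℝ)) * (1/4) + (1/(n:ℝ)) * ((n:ℝ)/4) + 1/10) := hcomb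
    _ ≤ ENNReal.ofReal ((1 - 1 / n) * ((K : ℝ) / ((K : ℝ) + 1)) ^ 2) :=
        ENNReal.ofReal_le_ofReal hreal
    _ ≤ risk1 (Pdist n) g := hfirst
end

section
/- Suppose Assumption 1 holds with constant m > 0, E‖X‖² < ∞, and the Gram matrix Σ = E[X Xᵀ] is invertible. Let (X_i, Y_i)_{i=1}^n be an i.i.d. sample from P and define the projection estimator ĝ_proj(x) = ⟨ŵ, x⟩ with ŵ = Σ^{-1} (1/n) ∑_{i=1}^n Y_i X_i. Then E[R(ĝ_proj)] - inf_{g ∈ F_lin} R(g) ≤ m² d / n. -/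
open MeasureTheory ProbabilityTheory ENNReal Matrix

/-- The (population) risk of a predictor `g`, with respect to the distribution `P`
of a random pair `(X, Y) ∈ ℝ^d × ℝ`: `R(g) = E[(g(X) - Y)²]`. -/
noncomputable def risk {d : ℕ} (P : Measure ((Fin d → ℝ) × ℝ)) (g : (Fin d → ℝ) → ℝ) : ℝ≥0∞ :=
  ∫⁻ p, ENNReal.ofReal ((g p.1 - p.2) ^ 2) ∂P

/-- Assumption 1: `sup_x E[Y² | X = x] ≤ m²`, formalized as an almost-everywhere bound on the
conditional expectation of `Y²` given the σ-algebra generated by `X` (the first coordinate). -/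
def Assumption1 {d : ℕ} (P : Measure ((Fin d → ℝ) × ℝ)) (m : ℝ) : Prop :=
  ∀ᵐ p ∂P,
    (P[fun q : (Fin d → ℝ) × ℝ => q.2 ^ 2|MeasurableSpace.comap Prod.fst inferInstance]) p ≤ m ^ 2

private lemma pi_mul {α : Type*} [MeasurableSpace α] {μ : Measure α} [IsProbabilityMeasure μ]
    {n : ℕ} (i j : Fin n) {g1 g2 : α → ℝ} (h1 : Integrable g1 μ) (h2 : Integrable g2 μ)
    (h12 : Integrable (fun x => g1 x * g2 x) μ) :
    Integrable (fun s : Fin n → α => g1 (s i) * g2 (s j)) (Measure.pi fun _ => μ) ∧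
      ∫ s, g1 (s i) * g2 (s j) ∂(Measure.pi fun _ => μ) =
        if i = j then ∫ x, g1 x * g2 x ∂μ else (∫ x, g1 x ∂μ) * ∫ x, g2 x ∂μ := by
  classical
  letI : MeasureSpace α := ⟨μ⟩
  haveI : SigmaFinite (volume : Measure α) := by show SigmaFinite μ; infer_instance
  have hvol : (Measure.pi fun _ : Fin n => μ) = (volume : Measure (Fin n → α)) := rfl
  by_cases hij : i = j
  · subst hij
    set f : Fin n → α → ℝ := fun c => if c = i then fun x => g1 x * g2 x else fun _ => 1 with hf
    have hprod : ∀ s : Fin n → α, (∏ c, f c (s c)) = g1 (s i) * g2 (s i) := by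
      intro s
      rw [Finset.prod_eq_single i (fun c _ hc => by simp [hf, hc]) (by simp)]
      simp [hf]
    have hint : ∀ c, Integrable (f c) := by
      intro c
      by_cases hc : c = i
      · subst hc; show Integrable _ μ; simpa [hf] using h12
      · simpa [hf, hc] using (integrable_const (1:ℝ) (μ := μ))
    have hI : Integrable (fun s : Fin n → α => g1 (s i) * g2 (s i))
        (Measure.pi fun _ : Fin n => μ) := by
      rw [hvol]
      have := MeasureTheory.Integrable.fintype_prod (f := f) hint
      rwa [show (fun s : Fin n → α => ∏ c, f c (s c))
          = fun s : Fin n → α => g1 (s i) * g2 (s i) from funext hprod] at this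
    refine ⟨hI, ?_⟩
    rw [if_pos rfl,
      show (fun s : Fin n → α => g1 (s i) * g2 (s i))
        = fun s : Fin n → α => ∏ c, f c (s c) from (funext hprod).symm,
      MeasureTheory.integral_fintype_prod_eq_prod f,
      Finset.prod_eq_single i (fun c _ hc => by simp [hf, hc]) (by simp)]
    simp only [hf, if_pos rfl]
  · set f : Fin n → α → ℝ :=
      fun c => if c = i then g1 else if c = j then g2 else fun _ => 1 with hf
    have hprod : ∀ s : Fin n → α, (∏ c, f c (s c)) = g1 (s i) * g2 (s j) := by
      intro s
      rw [← Finset.prod_subset (Finset.subset_univ ({i, j} : Finset (Fin n)))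
        (fun c _ hc => ?_), Finset.prod_pair hij]
      · simp [hf, hij, Ne.symm hij]
      · simp only [Finset.mem_insert, Finset.mem_singleton, not_or] at hc
        simp [hf, hc.1, hc.2]
    have hint : ∀ c, Integrable (f c) := by
      intro c
      by_cases hc : c = i
      · subst hc; show Integrable _ μ; simpa [hf] using h1
      · by_cases hc2 : c = j
        · subst hc2; show Integrable _ μ; simpa [hf, hc] using h2
        · simpa [hf, hc, hc2] using (integrable_const (1:ℝ) (μ := μ))
    have hI : Integrable (fun s : Fin n → α => g1 (s i) * g2 (s j))
        (Measure.pi fun _ : Fin n => μ) := by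
      rw [hvol]
      have := MeasureTheory.Integrable.fintype_prod (f := f) hint
      rwa [show (fun s : Fin n → α => ∏ c, f c (s c))
          = fun s : Fin n → α => g1 (s i) * g2 (s j) from funext hprod] at this
    refine ⟨hI, ?_⟩
    rw [if_neg hij,
      show (fun s : Fin n → α => g1 (s i) * g2 (s j))
        = fun s : Fin n → α => ∏ c, f c (s c) from (funext hprod).symm,
      MeasureTheory.integral_fintype_prod_eq_prod f,
      ← Finset.prod_subset (Finset.subset_univ ({i, j} : Finset (Fin n)))
        (fun c _ hc => ?_), Finset.prod_pair hij]
    · simp only [hf, if_pos rfl, if_neg hij, if_neg (Ne.symm hij)]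
      rfl
    · simp only [Finset.mem_insert, Finset.mem_singleton, not_or] at hc
      simp [hf, hc.1, hc.2]

private def mG (d : ℕ) : MeasurableSpace ((Fin d → ℝ) × ℝ) :=
  MeasurableSpace.comap Prod.fst inferInstance

private lemma key_sq_mul {d : ℕ} {P : Measure ((Fin d → ℝ) × ℝ)} [IsProbabilityMeasure P] {m : ℝ}
    (hP : Assumption1 P m) (hY2 : Integrable (fun p => p.2 ^ 2) P)
    {h : (Fin d → ℝ) → ℝ} (hc : Continuous h) (hnn : ∀ x, 0 ≤ h x)
    (hint : Integrable (fun p => h p.1) P) :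
    Integrable (fun p => p.2 ^ 2 * h p.1) P ∧
      ∫ p, p.2 ^ 2 * h p.1 ∂P ≤ m ^ 2 * ∫ p, h p.1 ∂P := by
  classical
  have hm2 : (0:ℝ) ≤ m ^ 2 := sq_nonneg m
  have hle : mG d ≤ (Prod.instMeasurableSpace :
      MeasurableSpace ((Fin d → ℝ) × ℝ)) := measurable_fst.comap_le
  set hk : ℕ → (Fin d → ℝ) × ℝ → ℝ := fun k p => min (h p.1) (k : ℝ) with hhk
  have hk_nonneg : ∀ k p, 0 ≤ hk k p := fun k p => le_min (hnn _) (Nat.cast_nonneg k)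
  have hk_le_h : ∀ k p, hk k p ≤ h p.1 := fun k p => min_le_left _ _
  have hk_le_k : ∀ k p, hk k p ≤ (k : ℝ) := fun k p => min_le_right _ _
  have hk_meas : ∀ k, StronglyMeasurable[mG d] (hk k) := by
    intro k
    have h1 : Measurable[mG d] (Prod.fst : (Fin d → ℝ) × ℝ → Fin d → ℝ) :=
      Measurable.of_comap_le le_rfl
    exact ((hc.measurable.min measurable_const).comp h1).stronglyMeasurable
  have hk_cont : ∀ k, Continuous (hk k) := fun k =>
    (hc.comp continuous_fst).min continuous_const
  have step_int : ∀ k, Integrable (fun p => hk k p * p.2 ^ 2) P := by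
    intro k
    refine (hY2.const_mul (k : ℝ)).mono
      ((hk_cont k).mul (continuous_snd.pow 2)).aestronglyMeasurable
      (Filter.Eventually.of_forall fun p => ?_)
    rw [Real.norm_eq_abs, Real.norm_eq_abs, abs_mul, abs_of_nonneg (hk_nonneg k p),
      abs_of_nonneg (sq_nonneg _), abs_of_nonneg (by positivity : (0:ℝ) ≤ (k:ℝ) * p.2 ^ 2)]
    exact mul_le_mul_of_nonneg_right (hk_le_k k p) (sq_nonneg _)
  have hk_int : ∀ k, Integrable (hk k) P := by
    intro k
    refine hint.mono (hk_cont k).aestronglyMeasurable (Filter.Eventually.of_forall fun p => ?_)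
    rw [Real.norm_eq_abs, Real.norm_eq_abs, abs_of_nonneg (hk_nonneg k p)]
    exact (hk_le_h k p).trans (le_abs_self _)
  have step1 : ∀ k, ∫ p, hk k p * p.2 ^ 2 ∂P ≤ m ^ 2 * ∫ p, h p.1 ∂P := by
    intro k
    have hpull : P[hk k * (fun q => q.2 ^ 2)|mG d] =ᵐ[P] hk k * P[fun q => q.2 ^ 2|mG d] :=
      condExp_mul_of_stronglyMeasurable_left (hk_meas k) (by exact step_int k) hY2
    have hcond_int : Integrable (hk k * P[fun q => q.2 ^ 2|mG d]) P :=
      Integrable.bdd_mul integrable_condExp ((hk_meas k).mono hle).aestronglyMeasurable (μ := P)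
        (c := (k : ℝ)) (Filter.Eventually.of_forall fun p => by
          rw [Real.norm_eq_abs, abs_of_nonneg (hk_nonneg k p)]; exact hk_le_k k p)
    calc ∫ p, hk k p * p.2 ^ 2 ∂P
        = ∫ p, (P[hk k * (fun q => q.2 ^ 2)|mG d]) p ∂P := (integral_condExp hle).symm
      _ = ∫ p, hk k p * (P[fun q => q.2 ^ 2|mG d]) p ∂P := integral_congr_ae hpull
      _ ≤ ∫ p, hk k p * m ^ 2 ∂P := by
          refine integral_mono_ae hcond_int ((hk_int k).mul_const _) ?_
          filter_upwards [hP] with p hp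
          exact mul_le_mul_of_nonneg_left hp (hk_nonneg k p)
      _ = m ^ 2 * ∫ p, hk k p ∂P := by rw [integral_mul_const]; ring
      _ ≤ m ^ 2 * ∫ p, h p.1 ∂P := by
          refine mul_le_mul_of_nonneg_left ?_ hm2
          exact integral_mono (hk_int k) hint fun p => hk_le_h k p
  -- monotone convergence
  have hmono : Monotone fun k : ℕ => fun p : (Fin d → ℝ) × ℝ =>
      ENNReal.ofReal (hk k p * p.2 ^ 2) := by
    intro k k' hkk p
    exact ENNReal.ofReal_le_ofReal (mul_le_mul_of_nonneg_right
      (min_le_min le_rfl (Nat.cast_le.2 hkk)) (sq_nonneg _))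
  have hsup : ∀ p : (Fin d → ℝ) × ℝ,
      (⨆ k : ℕ, ENNReal.ofReal (hk k p * p.2 ^ 2)) = ENNReal.ofReal (h p.1 * p.2 ^ 2) := by
    intro p
    refine le_antisymm (iSup_le fun k => ENNReal.ofReal_le_ofReal
      (mul_le_mul_of_nonneg_right (hk_le_h k p) (sq_nonneg _))) ?_
    refine le_iSup_of_le ⌈h p.1⌉₊ (le_of_eq ?_)
    rw [hhk]
    simp only [min_eq_left (Nat.le_ceil (h p.1))]
  have hlin : ∫⁻ p, ENNReal.ofReal (h p.1 * p.2 ^ 2) ∂P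
      = ⨆ k : ℕ, ∫⁻ p, ENNReal.ofReal (hk k p * p.2 ^ 2) ∂P := by
    rw [← lintegral_iSup (f := fun k p => ENNReal.ofReal (hk k p * p.2 ^ 2)) (fun k => ((hk_cont k).mul (continuous_snd.pow 2)).measurable.ennreal_ofReal)
      hmono]
    exact lintegral_congr fun p => (hsup p).symm
  have hfin : ∫⁻ p, ENNReal.ofReal (h p.1 * p.2 ^ 2) ∂P
      ≤ ENNReal.ofReal (m ^ 2 * ∫ p, h p.1 ∂P) := by
    rw [hlin]
    refine iSup_le fun k => ?_
    rw [← ofReal_integral_eq_lintegral_ofReal (step_int k)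
      (Filter.Eventually.of_forall fun p => mul_nonneg (hk_nonneg k p) (sq_nonneg _))]
    exact ENNReal.ofReal_le_ofReal (step1 k)
  have hInt : Integrable (fun p => h p.1 * p.2 ^ 2) P := by
    refine (lintegral_ofReal_ne_top_iff_integrable
      ((hc.comp continuous_fst).mul (continuous_snd.pow 2)).aestronglyMeasurable
      (Filter.Eventually.of_forall fun p => mul_nonneg (hnn _) (sq_nonneg _))).1 ?_
    exact (hfin.trans_lt ofReal_lt_top).ne
  have hle2 : ∫ p, h p.1 * p.2 ^ 2 ∂P ≤ m ^ 2 * ∫ p, h p.1 ∂P := by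
    have := hfin
    rw [← ofReal_integral_eq_lintegral_ofReal hInt
      (Filter.Eventually.of_forall fun p => mul_nonneg (hnn _) (sq_nonneg _))] at this
    exact (ENNReal.ofReal_le_ofReal_iff
      (mul_nonneg hm2 (integral_nonneg fun p => hnn _))).1 this
  have hcomm : (fun p : (Fin d → ℝ) × ℝ => p.2 ^ 2 * h p.1)
      = fun p => h p.1 * p.2 ^ 2 := funext fun p => mul_comm _ _
  rw [hcomm]
  exact ⟨hInt, hle2⟩

/-- under Assumption 1, with `E‖X‖² < ∞` and `Σ = E[XXᵀ]` invertible, the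
projection estimator `ĝ_proj(x) = ⟨Σ⁻¹ (1/n) ∑ᵢ YᵢXᵢ, x⟩` satisfies
`E R(ĝ_proj) ≤ inf_{g ∈ F_lin} R(g) + m² d / n`. -/
theorem stmt12 (d n : ℕ) (hn : 1 ≤ n) (m : ℝ) (hm : 0 < m)
    (P : Measure ((Fin d → ℝ) × ℝ)) [IsProbabilityMeasure P] (hP : Assumption1 P m)
    (hX : (∫⁻ p, ENNReal.ofReal (p.1 ⬝ᵥ p.1) ∂P) < ⊤)
    (Sig : Matrix (Fin d) (Fin d) ℝ)
    (hSig : ∀ i j, Sig i j = ∫ p, p.1 i * p.1 j ∂P)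
    (hinv : IsUnit Sig.det) :
    ∫⁻ s, risk P (fun x => Sig⁻¹.mulVec ((n : ℝ)⁻¹ • ∑ i, (s i).2 • (s i).1) ⬝ᵥ x)
        ∂(Measure.pi fun _ : Fin n => P)
      ≤ (⨅ w : Fin d → ℝ, risk P fun x => w ⬝ᵥ x) + ENNReal.ofReal (m ^ 2 * d / n) := by
  classical
  have hnR : (0:ℝ) < n := by exact_mod_cast hn
  have hcontX : ∀ k : Fin d, Continuous fun p : (Fin d → ℝ) × ℝ => p.1 k :=
    fun k => (continuous_apply k).comp continuous_fst
  have hdotnn : ∀ x : Fin d → ℝ, 0 ≤ x ⬝ᵥ x :=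
    fun x => Finset.sum_nonneg fun i _ => mul_self_nonneg _
  have hsq_le : ∀ (x : Fin d → ℝ) (k : Fin d), x k * x k ≤ x ⬝ᵥ x := fun x k =>
    Finset.single_le_sum (f := fun i => x i * x i) (fun i _ => mul_self_nonneg _)
      (Finset.mem_univ k)
  have hxx_abs : ∀ (x : Fin d → ℝ) (k l : Fin d), |x k * x l| ≤ x ⬝ᵥ x := by
    intro x k l
    have h1 := hsq_le x k
    have h2 := hsq_le x l
    rw [abs_mul]
    nlinarith [abs_nonneg (x k), abs_nonneg (x l), sq_abs (x k), sq_abs (x l),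
      sq_nonneg (|x k| - |x l|)]
  have hXXc : Continuous fun p : (Fin d → ℝ) × ℝ => p.1 ⬝ᵥ p.1 := by
    simp only [dotProduct]
    exact continuous_finset_sum _ fun k _ => (hcontX k).mul (hcontX k)
  have hXX : Integrable (fun p => p.1 ⬝ᵥ p.1) P :=
    (lintegral_ofReal_ne_top_iff_integrable hXXc.aestronglyMeasurable
      (Filter.Eventually.of_forall fun p => hdotnn _)).1 hX.ne
  have hXij : ∀ k l, Integrable (fun p : (Fin d → ℝ) × ℝ => p.1 k * p.1 l) P := by
    intro k l
    refine hXX.mono ((hcontX k).mul (hcontX l)).aestronglyMeasurable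
      (Filter.Eventually.of_forall fun p => ?_)
    rw [Real.norm_eq_abs, Real.norm_eq_abs, abs_of_nonneg (hdotnn _)]
    exact hxx_abs p.1 k l
  have hsq_expand : ∀ v x : Fin d → ℝ, (v ⬝ᵥ x) ^ 2 = ∑ k, ∑ l, v k * v l * (x k * x l) := by
    intro v x
    rw [sq, dotProduct, Finset.sum_mul_sum]
    exact Finset.sum_congr rfl fun k _ => Finset.sum_congr rfl fun l _ => by ring
  have hwx2int : ∀ v : Fin d → ℝ, Integrable (fun p : (Fin d → ℝ) × ℝ => (v ⬝ᵥ p.1) ^ 2) P := by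
    intro v
    have : (fun p : (Fin d → ℝ) × ℝ => (v ⬝ᵥ p.1) ^ 2)
        = fun p => ∑ k, ∑ l, v k * v l * (p.1 k * p.1 l) := funext fun p => hsq_expand v p.1
    rw [this]
    exact integrable_finset_sum _ fun k _ =>
      integrable_finset_sum _ fun l _ => (hXij k l).const_mul _
  by_cases hY2 : Integrable (fun p : (Fin d → ℝ) × ℝ => p.2 ^ 2) P
  · -- main case: Y² integrable
    set A := Sig⁻¹ with hA
    have hSigT : Sigᵀ = Sig := by
      ext i j
      rw [transpose_apply, hSig, hSig]
      exact integral_congr_ae (Filter.Eventually.of_forall fun p => mul_comm _ _)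
    have hAT : Aᵀ = A := by rw [hA, Matrix.transpose_nonsing_inv, hSigT]
    have hSA : Sig * A = 1 := Matrix.mul_nonsing_inv Sig hinv
    have hAS : A * Sig = 1 := Matrix.nonsing_inv_mul Sig hinv
    have hQeq : ∀ v : Fin d → ℝ, v ⬝ᵥ Sig.mulVec v = ∫ p, (v ⬝ᵥ p.1) ^ 2 ∂P := by
      intro v
      calc v ⬝ᵥ Sig.mulVec v = ∑ k, ∑ l, v k * v l * Sig k l := by
            simp only [dotProduct, mulVec, Finset.mul_sum]
            exact Finset.sum_congr rfl fun k _ => Finset.sum_congr rfl fun l _ => by ring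
        _ = ∫ p, ∑ k, ∑ l, v k * v l * (p.1 k * p.1 l) ∂P := by
            rw [integral_finset_sum _
              (fun k _ => integrable_finset_sum _ fun l _ => (hXij k l).const_mul _)]
            refine Finset.sum_congr rfl fun k _ => ?_
            rw [integral_finset_sum _ (fun l _ => (hXij k l).const_mul _)]
            refine Finset.sum_congr rfl fun l _ => ?_
            rw [integral_const_mul, hSig]
        _ = ∫ p, (v ⬝ᵥ p.1) ^ 2 ∂P :=
            integral_congr_ae (Filter.Eventually.of_forall fun p => (hsq_expand v p.1).symm)
    have hQnn : ∀ v : Fin d → ℝ, 0 ≤ v ⬝ᵥ Sig.mulVec v := fun v =>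
      (hQeq v) ▸ integral_nonneg fun p => sq_nonneg _
    have hSAv : ∀ v : Fin d → ℝ, Sig.mulVec (A.mulVec v) = v := by
      intro v
      rw [Matrix.mulVec_mulVec, hSA, Matrix.one_mulVec]
    have hAnn : ∀ v : Fin d → ℝ, 0 ≤ v ⬝ᵥ A.mulVec v := by
      intro v
      have h0 := hQnn (A.mulVec v)
      rwa [hSAv v, dotProduct_comm] at h0
    -- the optimal linear predictor
    set b : Fin d → ℝ := fun k => ∫ p, p.2 * p.1 k ∂P with hb
    have hZint : ∀ k, Integrable (fun p : (Fin d → ℝ) × ℝ => p.2 * p.1 k) P := by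
      intro k
      refine (hY2.add (hXij k k)).mono
        ((continuous_snd.mul (hcontX k)).aestronglyMeasurable)
        (Filter.Eventually.of_forall fun p => ?_)
      rw [Real.norm_eq_abs, Real.norm_eq_abs, abs_mul]
      have h1 : |p.2| * |p.1 k| ≤ p.2 ^ 2 + p.1 k * p.1 k := by
        nlinarith [sq_abs p.2, sq_abs (p.1 k), sq_nonneg (|p.2| - |p.1 k|)]
      exact h1.trans (le_abs_self _)
    set wstar : Fin d → ℝ := A.mulVec b with hws
    have hSw : Sig.mulVec wstar = b := hSAv b
    have hexp : ∀ w : Fin d → ℝ, (fun p : (Fin d → ℝ) × ℝ => (w ⬝ᵥ p.1 - p.2) ^ 2)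
        = fun p => (w ⬝ᵥ p.1) ^ 2 - 2 * ∑ k, w k * (p.2 * p.1 k) + p.2 ^ 2 := by
      intro w
      funext p
      have h1 : (w ⬝ᵥ p.1) * p.2 = ∑ k, w k * (p.2 * p.1 k) := by
        rw [dotProduct, Finset.sum_mul]
        exact Finset.sum_congr rfl fun k _ => by ring
      calc (w ⬝ᵥ p.1 - p.2) ^ 2 = (w ⬝ᵥ p.1) ^ 2 - 2 * ((w ⬝ᵥ p.1) * p.2) + p.2 ^ 2 := by ring
        _ = _ := by rw [h1]
    have hriskint : ∀ w : Fin d → ℝ,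
        Integrable (fun p : (Fin d → ℝ) × ℝ => (w ⬝ᵥ p.1 - p.2) ^ 2) P := by
      intro w
      rw [hexp w]
      exact ((hwx2int w).sub
        ((integrable_finset_sum _ fun k _ => (hZint k).const_mul (w k)).const_mul 2)).add hY2
    have hriskR_eq : ∀ w : Fin d → ℝ, ∫ p, (w ⬝ᵥ p.1 - p.2) ^ 2 ∂P
        = w ⬝ᵥ Sig.mulVec w - 2 * (w ⬝ᵥ b) + ∫ p, p.2 ^ 2 ∂P := by
      intro w
      have hi3 : Integrable (fun p : (Fin d → ℝ) × ℝ => 2 * ∑ k, w k * (p.2 * p.1 k)) P :=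
        (integrable_finset_sum _ fun k _ => (hZint k).const_mul (w k)).const_mul 2
      have hi2 : Integrable (fun p : (Fin d → ℝ) × ℝ =>
          (w ⬝ᵥ p.1) ^ 2 - 2 * ∑ k, w k * (p.2 * p.1 k)) P := (hwx2int w).sub hi3
      rw [hexp w, integral_add hi2 hY2, integral_sub (hwx2int w) hi3, integral_const_mul,
        integral_finset_sum _ (fun k _ => (hZint k).const_mul (w k)), ← hQeq w]
      have hsum : ∑ k, ∫ p : (Fin d → ℝ) × ℝ, w k * (p.2 * p.1 k) ∂P = w ⬝ᵥ b := by
        rw [dotProduct]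
        exact Finset.sum_congr rfl fun k _ => by rw [integral_const_mul]
      rw [hsum]
    have key_id : ∀ w : Fin d → ℝ, ∫ p, (w ⬝ᵥ p.1 - p.2) ^ 2 ∂P
        = (∫ p, (wstar ⬝ᵥ p.1 - p.2) ^ 2 ∂P)
          + (w - wstar) ⬝ᵥ Sig.mulVec (w - wstar) := by
      intro w
      rw [hriskR_eq w, hriskR_eq wstar]
      have e1 : (w - wstar) ⬝ᵥ Sig.mulVec (w - wstar)
          = w ⬝ᵥ Sig.mulVec w - 2 * (w ⬝ᵥ b) + wstar ⬝ᵥ b := by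
        have h2 : wstar ⬝ᵥ Sig.mulVec w = w ⬝ᵥ b := by
          rw [dotProduct_mulVec, ← Matrix.mulVec_transpose, hSigT, hSw, dotProduct_comm]
        rw [Matrix.mulVec_sub, dotProduct_sub, sub_dotProduct, sub_dotProduct, hSw, h2]
        ring
      have h3 : wstar ⬝ᵥ Sig.mulVec wstar = wstar ⬝ᵥ b := by rw [hSw]
      rw [e1, h3]
      ring
    have hrisk_eq : ∀ w : Fin d → ℝ,
        (risk P fun x => w ⬝ᵥ x) = ENNReal.ofReal (∫ p, (w ⬝ᵥ p.1 - p.2) ^ 2 ∂P) := fun w =>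
      (ofReal_integral_eq_lintegral_ofReal (hriskint w)
        (Filter.Eventually.of_forall fun p => sq_nonneg _)).symm
    have hrnn : 0 ≤ ∫ p, (wstar ⬝ᵥ p.1 - p.2) ^ 2 ∂P := integral_nonneg fun p => sq_nonneg _
    have hinf_ge : ENNReal.ofReal (∫ p, (wstar ⬝ᵥ p.1 - p.2) ^ 2 ∂P)
        ≤ ⨅ w : Fin d → ℝ, risk P fun x => w ⬝ᵥ x := by
      refine le_iInf fun w => ?_
      rw [hrisk_eq w, key_id w]
      exact ENNReal.ofReal_le_ofReal (le_add_of_nonneg_right (hQnn _))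
    -- centered coordinate functions
    set gk : Fin d → ((Fin d → ℝ) × ℝ) → ℝ := fun k p => p.2 * p.1 k - b k with hgk
    have hgint : ∀ k, Integrable (gk k) P := fun k => (hZint k).sub (integrable_const _)
    have hbl : ∀ l, ∫ p : (Fin d → ℝ) × ℝ, p.2 * p.1 l ∂P = b l := fun l => rfl
    have hgzero : ∀ k, ∫ p, gk k p ∂P = 0 := by
      intro k
      rw [hgk]
      rw [integral_sub (hZint k) (integrable_const _), integral_const, probReal_univ, hbl]
      simp
    have hdotc : Continuous fun x : Fin d → ℝ => x ⬝ᵥ x := by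
      simp only [dotProduct]
      exact continuous_finset_sum _ fun k _ => (continuous_apply k).mul (continuous_apply k)
    have hY2dot : Integrable (fun p : (Fin d → ℝ) × ℝ => p.2 ^ 2 * (p.1 ⬝ᵥ p.1)) P :=
      (key_sq_mul hP hY2 hdotc hdotnn hXX).1
    have hZZ : ∀ k l, Integrable
        (fun p : (Fin d → ℝ) × ℝ => (p.2 * p.1 k) * (p.2 * p.1 l)) P := by
      intro k l
      refine hY2dot.mono ((continuous_snd.mul (hcontX k)).mul
        (continuous_snd.mul (hcontX l))).aestronglyMeasurable
        (Filter.Eventually.of_forall fun p => ?_)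
      rw [Real.norm_eq_abs, Real.norm_eq_abs]
      have h1 : (p.2 * p.1 k) * (p.2 * p.1 l) = p.2 ^ 2 * (p.1 k * p.1 l) := by ring
      rw [h1, abs_mul, abs_of_nonneg (sq_nonneg _),
        abs_of_nonneg (mul_nonneg (sq_nonneg _) (hdotnn _))]
      exact mul_le_mul_of_nonneg_left (hxx_abs p.1 k l) (sq_nonneg _)
    have hggexp : ∀ k l, (fun p : (Fin d → ℝ) × ℝ => gk k p * gk l p)
        = fun p => (p.2 * p.1 k) * (p.2 * p.1 l) - b k * (p.2 * p.1 l)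
            - b l * (p.2 * p.1 k) + b k * b l := by
      intro k l
      funext p
      rw [hgk]
      ring
    have hggint : ∀ k l, Integrable (fun p => gk k p * gk l p) P := by
      intro k l
      rw [hggexp k l]
      exact (((hZZ k l).sub ((hZint l).const_mul (b k))).sub
        ((hZint k).const_mul (b l))).add (integrable_const _)
    have hCov : ∀ k l, ∫ p, gk k p * gk l p ∂P
        = (∫ p, (p.2 * p.1 k) * (p.2 * p.1 l) ∂P) - b k * b l := by
      intro k l
      have i1 : Integrable (fun p : (Fin d → ℝ) × ℝ =>
          p.2 * p.1 k * (p.2 * p.1 l) - b k * (p.2 * p.1 l)) P :=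
        (hZZ k l).sub ((hZint l).const_mul (b k))
      have i2 : Integrable (fun p : (Fin d → ℝ) × ℝ =>
          p.2 * p.1 k * (p.2 * p.1 l) - b k * (p.2 * p.1 l) - b l * (p.2 * p.1 k)) P :=
        i1.sub ((hZint k).const_mul (b l))
      rw [hggexp k l, integral_add i2 (integrable_const _),
        integral_sub i1 ((hZint k).const_mul (b l)),
        integral_sub (hZZ k l) ((hZint l).const_mul (b k)),
        integral_const_mul, integral_const_mul, integral_const, probReal_univ, hbl, hbl]
      simp
      ring
    -- sums of centered variables
    set Sv : (Fin n → (Fin d → ℝ) × ℝ) → Fin d → ℝ := fun s k => ∑ i, gk k (s i) with hSv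
    have hne : (n : ℝ) ≠ 0 := ne_of_gt hnR
    have hwsub : ∀ s : Fin n → (Fin d → ℝ) × ℝ,
        A.mulVec ((n : ℝ)⁻¹ • ∑ i, (s i).2 • (s i).1) - wstar
          = A.mulVec fun k => (n : ℝ)⁻¹ * Sv s k := by
      intro s
      have harg : ((n : ℝ)⁻¹ • ∑ i, (s i).2 • (s i).1) - b
          = fun k => (n : ℝ)⁻¹ * Sv s k := by
        funext k
        simp only [Pi.sub_apply, Pi.smul_apply, Finset.sum_apply, smul_eq_mul, hSv, hgk]
        rw [Finset.sum_sub_distrib, Finset.sum_const, Finset.card_univ, Fintype.card_fin,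
          mul_sub, nsmul_eq_mul, ← mul_assoc, inv_mul_cancel₀ hne, one_mul]
      rw [hws, ← Matrix.mulVec_sub, harg]
    have hPsi : ∀ s : Fin n → (Fin d → ℝ) × ℝ,
        (A.mulVec ((n : ℝ)⁻¹ • ∑ i, (s i).2 • (s i).1) - wstar) ⬝ᵥ
          Sig.mulVec (A.mulVec ((n : ℝ)⁻¹ • ∑ i, (s i).2 • (s i).1) - wstar)
        = ((n : ℝ)⁻¹) ^ 2 * ∑ k, ∑ l, A k l * (Sv s k * Sv s l) := by
      intro s
      rw [hwsub s, hSAv, dotProduct_comm]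
      simp only [dotProduct, mulVec, Finset.mul_sum]
      refine Finset.sum_congr rfl fun k _ => ?_
      refine Finset.sum_congr rfl fun l _ => ?_
      ring
    have hSvexp : ∀ k l, (fun s : Fin n → (Fin d → ℝ) × ℝ => Sv s k * Sv s l)
        = fun s => ∑ i, ∑ j, gk k (s i) * gk l (s j) := by
      intro k l
      funext s
      rw [hSv]
      exact Finset.sum_mul_sum _ _ _ _
    have hterm_int : ∀ (k l : Fin d) (i j : Fin n), Integrable
        (fun s : Fin n → (Fin d → ℝ) × ℝ => gk k (s i) * gk l (s j))
        (Measure.pi fun _ => P) :=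
      fun k l i j => (pi_mul i j (hgint k) (hgint l) (hggint k l)).1
    have hterm_val : ∀ (k l : Fin d) (i j : Fin n),
        ∫ s, gk k (s i) * gk l (s j) ∂(Measure.pi fun _ : Fin n => P)
          = if i = j then ∫ p, gk k p * gk l p ∂P else 0 := by
      intro k l i j
      rw [(pi_mul i j (hgint k) (hgint l) (hggint k l)).2]
      by_cases hij : i = j
      · simp [hij]
      · simp [hij, hgzero k]
    have hquad_int : ∀ k l, Integrable
        (fun s : Fin n → (Fin d → ℝ) × ℝ => Sv s k * Sv s l) (Measure.pi fun _ => P) := by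
      intro k l
      rw [hSvexp k l]
      exact integrable_finset_sum _ fun i _ =>
        integrable_finset_sum _ fun j _ => hterm_int k l i j
    have hquad_val : ∀ k l, ∫ s, Sv s k * Sv s l ∂(Measure.pi fun _ : Fin n => P)
        = n * ∫ p, gk k p * gk l p ∂P := by
      intro k l
      rw [hSvexp k l]
      calc ∫ s, ∑ i, ∑ j, gk k (s i) * gk l (s j) ∂(Measure.pi fun _ : Fin n => P)
          = ∑ i, ∑ j, ∫ s, gk k (s i) * gk l (s j) ∂(Measure.pi fun _ : Fin n => P) := by
            rw [integral_finset_sum _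
              (fun i _ => integrable_finset_sum _ fun j _ => hterm_int k l i j)]
            exact Finset.sum_congr rfl fun i _ =>
              integral_finset_sum _ (fun j _ => hterm_int k l i j)
        _ = ∑ _i : Fin n, ∫ p, gk k p * gk l p ∂P := by
            refine Finset.sum_congr rfl fun i _ => ?_
            rw [Finset.sum_congr rfl fun j (_ : j ∈ Finset.univ) => hterm_val k l i j]
            simp
        _ = n * ∫ p, gk k p * gk l p ∂P := by
            rw [Finset.sum_const, Finset.card_univ, Fintype.card_fin, nsmul_eq_mul]
    have hPhi_int : ∀ k l, Integrable
        (fun s : Fin n → (Fin d → ℝ) × ℝ => A k l * (Sv s k * Sv s l))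
        (Measure.pi fun _ => P) := fun k l => (hquad_int k l).const_mul _
    have hPsiInt : Integrable (fun s : Fin n → (Fin d → ℝ) × ℝ =>
        ((n : ℝ)⁻¹) ^ 2 * ∑ k, ∑ l, A k l * (Sv s k * Sv s l)) (Measure.pi fun _ => P) :=
      (integrable_finset_sum _ fun k _ =>
        integrable_finset_sum _ fun l _ => hPhi_int k l).const_mul _
    have hPsiVal : ∫ s, ((n : ℝ)⁻¹) ^ 2 * ∑ k, ∑ l, A k l * (Sv s k * Sv s l)
          ∂(Measure.pi fun _ : Fin n => P)
        = ((n : ℝ)⁻¹) ^ 2 * n * ∑ k, ∑ l, A k l * ∫ p, gk k p * gk l p ∂P := by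
      rw [integral_const_mul, integral_finset_sum _
        (fun k _ => integrable_finset_sum _ fun l _ => hPhi_int k l), mul_assoc]
      congr 1
      rw [Finset.mul_sum]
      refine Finset.sum_congr rfl fun k _ => ?_
      rw [integral_finset_sum _ (fun l _ => hPhi_int k l), Finset.mul_sum]
      refine Finset.sum_congr rfl fun l _ => ?_
      rw [integral_const_mul, hquad_val k l]
      ring
    -- the trace bound
    have hAxc : Continuous fun x : Fin d → ℝ => x ⬝ᵥ A.mulVec x := by
      simp only [dotProduct, mulVec]
      exact continuous_finset_sum _ fun k _ => (continuous_apply k).mul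
        (continuous_finset_sum _ fun l _ => continuous_const.mul (continuous_apply l))
    have hAx_expand : (fun p : (Fin d → ℝ) × ℝ => p.1 ⬝ᵥ A.mulVec p.1)
        = fun p => ∑ k, ∑ l, A k l * (p.1 k * p.1 l) := by
      funext p
      simp only [dotProduct, mulVec, Finset.mul_sum]
      exact Finset.sum_congr rfl fun k _ => Finset.sum_congr rfl fun l _ => by ring
    have hAx_int : Integrable (fun p : (Fin d → ℝ) × ℝ => p.1 ⬝ᵥ A.mulVec p.1) P := by
      rw [hAx_expand]
      exact integrable_finset_sum _ fun k _ =>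
        integrable_finset_sum _ fun l _ => (hXij k l).const_mul _
    have hkey := key_sq_mul hP hY2 hAxc (fun x => hAnn x) hAx_int
    have htr : ∫ p : (Fin d → ℝ) × ℝ, p.1 ⬝ᵥ A.mulVec p.1 ∂P = (d : ℝ) := by
      erw [hAx_expand, integral_finset_sum _
        (fun k _ => integrable_finset_sum _ fun l _ => (hXij k l).const_mul _)]
      have e1 : ∀ k : Fin d, ∑ l, ∫ p : (Fin d → ℝ) × ℝ, A k l * (p.1 k * p.1 l) ∂P
          = (A * Sig) k k := by
        intro k
        rw [Matrix.mul_apply]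
        refine Finset.sum_congr rfl fun l _ => ?_
        rw [integral_const_mul, ← hSig, hSig l k]
        rw [hSig]
        congr 1
        exact integral_congr_ae (Filter.Eventually.of_forall fun p => mul_comm _ _)
      calc ∑ k, ∫ p : (Fin d → ℝ) × ℝ, ∑ l, A k l * (p.1 k * p.1 l) ∂P
          = ∑ k, (A * Sig) k k := by
            refine Finset.sum_congr rfl fun k _ => ?_
            erw [integral_finset_sum _ (fun l _ => (hXij k l).const_mul _), e1 k]
        _ = Matrix.trace (A * Sig) := rfl
        _ = (d : ℝ) := by rw [hAS, Matrix.trace_one, Fintype.card_fin]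
    have hyAx : ∫ p : (Fin d → ℝ) × ℝ, p.2 ^ 2 * (p.1 ⬝ᵥ A.mulVec p.1) ∂P
        = ∑ k, ∑ l, A k l * ∫ p, (p.2 * p.1 k) * (p.2 * p.1 l) ∂P := by
      have hpt : (fun p : (Fin d → ℝ) × ℝ => p.2 ^ 2 * (p.1 ⬝ᵥ A.mulVec p.1))
          = fun p => ∑ k, ∑ l, A k l * ((p.2 * p.1 k) * (p.2 * p.1 l)) := by
        funext p
        simp only [dotProduct, mulVec, Finset.mul_sum]
        exact Finset.sum_congr rfl fun k _ => Finset.sum_congr rfl fun l _ => by ring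
      erw [hpt, integral_finset_sum _
        (fun k _ => integrable_finset_sum _ fun l _ => (hZZ k l).const_mul _)]
      refine Finset.sum_congr rfl fun k _ => ?_
      erw [integral_finset_sum _ (fun l _ => (hZZ k l).const_mul _)]
      exact Finset.sum_congr rfl fun l _ => by rw [integral_const_mul]
    have hbAb_eq : b ⬝ᵥ A.mulVec b = ∑ k, ∑ l, A k l * (b k * b l) := by
      simp only [dotProduct, mulVec, Finset.mul_sum]
      exact Finset.sum_congr rfl fun k _ => Finset.sum_congr rfl fun l _ => by ring
    have hT : ∑ k, ∑ l, A k l * ∫ p, gk k p * gk l p ∂P ≤ m ^ 2 * d := by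
      have e : ∑ k, ∑ l, A k l * ∫ p, gk k p * gk l p ∂P
          = (∫ p : (Fin d → ℝ) × ℝ, p.2 ^ 2 * (p.1 ⬝ᵥ A.mulVec p.1) ∂P)
            - b ⬝ᵥ A.mulVec b := by
        rw [hyAx, hbAb_eq, ← Finset.sum_sub_distrib]
        refine Finset.sum_congr rfl fun k _ => ?_
        rw [← Finset.sum_sub_distrib]
        refine Finset.sum_congr rfl fun l _ => ?_
        rw [hCov k l]
        ring
      rw [e]
      calc (∫ p : (Fin d → ℝ) × ℝ, p.2 ^ 2 * (p.1 ⬝ᵥ A.mulVec p.1) ∂P) - b ⬝ᵥ A.mulVec b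
          ≤ ∫ p : (Fin d → ℝ) × ℝ, p.2 ^ 2 * (p.1 ⬝ᵥ A.mulVec p.1) ∂P := by
            linarith [hAnn b]
        _ ≤ m ^ 2 * ∫ p : (Fin d → ℝ) × ℝ, p.1 ⬝ᵥ A.mulVec p.1 ∂P := hkey.2
        _ = m ^ 2 * d := by rw [htr]
    -- assembling
    have hsamp : ∀ s : Fin n → (Fin d → ℝ) × ℝ,
        risk P (fun x => A.mulVec ((n : ℝ)⁻¹ • ∑ i, (s i).2 • (s i).1) ⬝ᵥ x)
          = ENNReal.ofReal (∫ p, (wstar ⬝ᵥ p.1 - p.2) ^ 2 ∂P)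
            + ENNReal.ofReal (((n : ℝ)⁻¹) ^ 2
                * ∑ k, ∑ l, A k l * (Sv s k * Sv s l)) := by
      intro s
      rw [hrisk_eq, key_id, ENNReal.ofReal_add hrnn (hQnn _), hPsi s]
    haveI : IsProbabilityMeasure (Measure.pi fun _ : Fin n => P) := inferInstance
    calc ∫⁻ s, risk P (fun x => A.mulVec ((n : ℝ)⁻¹ • ∑ i, (s i).2 • (s i).1) ⬝ᵥ x)
          ∂(Measure.pi fun _ : Fin n => P)
        = ∫⁻ s, (ENNReal.ofReal (∫ p, (wstar ⬝ᵥ p.1 - p.2) ^ 2 ∂P)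
            + ENNReal.ofReal (((n : ℝ)⁻¹) ^ 2 * ∑ k, ∑ l, A k l * (Sv s k * Sv s l)))
            ∂(Measure.pi fun _ : Fin n => P) := lintegral_congr fun s => hsamp s
      _ = ENNReal.ofReal (∫ p, (wstar ⬝ᵥ p.1 - p.2) ^ 2 ∂P)
            + ∫⁻ s, ENNReal.ofReal (((n : ℝ)⁻¹) ^ 2
                * ∑ k, ∑ l, A k l * (Sv s k * Sv s l))
              ∂(Measure.pi fun _ : Fin n => P) := by
          rw [lintegral_add_left measurable_const, lintegral_const, measure_univ, mul_one]
      _ ≤ (⨅ w : Fin d → ℝ, risk P fun x => w ⬝ᵥ x) + ENNReal.ofReal (m ^ 2 * d / n) := by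
          refine add_le_add hinf_ge ?_
          rw [← ofReal_integral_eq_lintegral_ofReal hPsiInt
            (Filter.Eventually.of_forall fun s => by
              show (0:ℝ) ≤ ((n : ℝ)⁻¹) ^ 2 * ∑ k, ∑ l, A k l * (Sv s k * Sv s l)
              rw [← hPsi s]
              exact hQnn _)]
          refine ENNReal.ofReal_le_ofReal ?_
          rw [hPsiVal]
          calc ((n : ℝ)⁻¹) ^ 2 * n * ∑ k, ∑ l, A k l * ∫ p, gk k p * gk l p ∂P
              ≤ ((n : ℝ)⁻¹) ^ 2 * n * (m ^ 2 * d) := by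
                refine mul_le_mul_of_nonneg_left hT (by positivity)
            _ = m ^ 2 * d / n := by
                field_simp
  · -- non-integrable case : the infimum is ⊤
    have hinf : (⨅ w : Fin d → ℝ, risk P fun x => w ⬝ᵥ x) = ⊤ := by
      rw [iInf_eq_top]
      intro w
      by_contra hne
      apply hY2
      have hcont : Continuous fun p : (Fin d → ℝ) × ℝ => (w ⬝ᵥ p.1 - p.2) ^ 2 := by
        have : Continuous fun p : (Fin d → ℝ) × ℝ => w ⬝ᵥ p.1 := by
          simp only [dotProduct]
          exact continuous_finset_sum _ fun k _ => continuous_const.mul (hcontX k)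
        exact (this.sub continuous_snd).pow 2
      have hint : Integrable (fun p : (Fin d → ℝ) × ℝ => (w ⬝ᵥ p.1 - p.2) ^ 2) P :=
        (lintegral_ofReal_ne_top_iff_integrable hcont.aestronglyMeasurable
          (Filter.Eventually.of_forall fun p => sq_nonneg _)).1 hne
      refine ((hint.const_mul 2).add ((hwx2int w).const_mul 2)).mono
        ((continuous_snd.pow 2).aestronglyMeasurable)
        (Filter.Eventually.of_forall fun p => ?_)
      simp only [Pi.add_apply, Real.norm_eq_abs, abs_of_nonneg (sq_nonneg (p.2 : ℝ))]
      rw [abs_of_nonneg (by positivity : (0:ℝ) ≤ 2 * (w ⬝ᵥ p.1 - p.2) ^ 2 + 2 * (w ⬝ᵥ p.1) ^ 2)]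
      nlinarith [sq_nonneg (w ⬝ᵥ p.1 + (w ⬝ᵥ p.1 - p.2)), sq_nonneg (w ⬝ᵥ p.1 - p.2),
        sq_nonneg (w ⬝ᵥ p.1)]
    rw [hinf, top_add]
    exact le_top
end

section
/- Fix n ≥ 1, δ ∈ (e^{-n}, 1), and a measurable function f : ℝ → ℝ with f(0) = 0 and sup_{x ∈ ℝ} f(x)² ≥ 1. Then there exists a distribution P_X of X on ℝ such that for any measurable estimator ĝ mapping samples in (ℝ × ℝ)^n to measurable functions ℝ → ℝ (possibly depending on P_X), there exists ε ∈ {-1, +1} such that, setting f_reg = ε f and Y = f_reg(X), the following three conditions hold: (i) there exists w* ∈ ℝ with R(g_{w*}) = 0; (ii) E[Y²] ≤ 1; (iii) with ‖f_reg‖_∞ = sup_x |f(x)| ∈ [1, +∞], the estimator ĝ computed on an i.i.d. sample of (X,Y) satisfies P( R(ĝ) ≥ min( ‖f_reg‖_∞² · log(1/δ) / (4n), 1 ) ) ≥ δ. -/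
open MeasureTheory ProbabilityTheory ENNReal

set_option maxHeartbeats 1000000

/-- a statistical lower bound showing the necessity of Assumption 1. For any
`n ≥ 1`, `δ ∈ (e^{-n}, 1)` and measurable `f` with `f(0) = 0` and `sup_x f(x)² ≥ 1`, there is
a distribution `P_X` such that for any measurable estimator `ĝ` there exists a sign
`ε ∈ {-1, 1}` such that, with `f_reg = ε f` and `Y = f_reg(X)`: (i) some linear predictor has
zero risk; (ii) `E[Y²] ≤ 1`; (iii) with probability at least `δ` over the i.i.d. sample,
`R(ĝ) ≥ min(‖f_reg‖_∞² log(1/δ)/(4n), 1)` (where `‖f_reg‖_∞² = sup_x f(x)²`). -/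
theorem stmt19 (n : ℕ) (hn : 1 ≤ n) (δ : ℝ)
    (hδ₁ : Real.exp (-(n : ℝ)) < δ) (hδ₂ : δ < 1)
    (f : ℝ → ℝ) (hf : Measurable f) (hf0 : f 0 = 0)
    (hsup : 1 ≤ ⨆ x : ℝ, ENNReal.ofReal (f x ^ 2)) :
    ∃ PX : Measure ℝ, IsProbabilityMeasure PX ∧
      ∀ ghat : (Fin n → ℝ × ℝ) → ℝ → ℝ, Measurable (Function.uncurry ghat) →
        ∃ ε : ℝ, (ε = 1 ∨ ε = -1) ∧
          (∃ wstar : ℝ,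
            risk1 (PX.map fun x => (x, ε * f x)) (fun x => wstar * x) = 0) ∧
          (∫⁻ p, ENNReal.ofReal (p.2 ^ 2) ∂(PX.map fun x => (x, ε * f x))) ≤ 1 ∧
          ENNReal.ofReal δ ≤
            (Measure.pi fun _ : Fin n => PX.map fun x => (x, ε * f x))
              {s | min ((⨆ x : ℝ, ENNReal.ofReal (f x ^ 2))
                      * ENNReal.ofReal (Real.log (1 / δ)) / (4 * n)) 1
                    ≤ risk1 (PX.map fun x => (x, ε * f x)) (ghat s)} := by
  have hδ0 : 0 < δ := lt_trans (Real.exp_pos _) hδ₁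
  have hn0 : (0:ℝ) < n := by exact_mod_cast Nat.lt_of_lt_of_le Nat.zero_lt_one hn
  have hnn0 : ((n:ℝ≥0∞)) ≠ 0 := by
    simpa using Nat.one_le_iff_ne_zero.mp hn
  set L : ℝ := Real.log (1/δ) with hLdef
  have hL0 : 0 < L := Real.log_pos (by rw [lt_div_iff₀ hδ0]; linarith)
  have hLn : L < n := by
    have h1 : Real.log (Real.exp (-(n:ℝ))) < Real.log δ :=
      Real.log_lt_log (Real.exp_pos _) hδ₁
    rw [Real.log_exp] at h1
    have h2 : L = -Real.log δ := by rw [hLdef, one_div, Real.log_inv]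
    linarith
  set p : ℝ := L / (2*n) with hpdef
  have hp0 : 0 < p := div_pos hL0 (by positivity)
  have hp2 : p < 1/2 := by
    rw [hpdef, div_lt_iff₀ (by positivity)]
    linarith
  set M := ⨆ x : ℝ, ENNReal.ofReal (f x ^ 2) with hMdef
  have hop : ENNReal.ofReal p = ENNReal.ofReal L / (2 * (n:ℝ≥0∞)) := by
    rw [hpdef, ENNReal.ofReal_div_of_pos (by positivity)]
    congr 1
    rw [show (2*(n:ℝ)) = ((2*n : ℕ) : ℝ) by push_cast; ring, ENNReal.ofReal_natCast]
    push_cast; ring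
  have hopne : ENNReal.ofReal p ≠ 0 := (ENNReal.ofReal_pos.mpr hp0).ne'
  have hopnt : ENNReal.ofReal p ≠ ⊤ := ENNReal.ofReal_ne_top
  -- choose x₀
  obtain ⟨x₀, hx₀T, hfx₀⟩ : ∃ x₀ : ℝ,
      min (M * ENNReal.ofReal L / (4 * (n:ℝ≥0∞))) 1
        ≤ ENNReal.ofReal p * ENNReal.ofReal (f x₀ ^ 2) ∧ f x₀ ≠ 0 := by
    rcases eq_or_ne M ⊤ with hM | hM
    · have : (ENNReal.ofReal p)⁻¹ < M := by
        rw [hM]; exact ENNReal.inv_lt_top.mpr (by simpa [pos_iff_ne_zero] using hopne)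
      obtain ⟨x₀, hx₀⟩ := lt_iSup_iff.mp this
      refine ⟨x₀, le_trans (min_le_right _ _) ?_, ?_⟩
      · calc (1:ℝ≥0∞) = ENNReal.ofReal p * (ENNReal.ofReal p)⁻¹ :=
              (ENNReal.mul_inv_cancel hopne hopnt).symm
          _ ≤ _ := mul_le_mul_right hx₀.le _
      · intro h0
        rw [h0] at hx₀
        simp at hx₀
    · have hM0 : M ≠ 0 := by intro h; rw [h] at hsup; simp at hsup
      obtain ⟨x₀, hx₀⟩ := lt_iSup_iff.mp (ENNReal.half_lt_self hM0 hM)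
      refine ⟨x₀, le_trans (min_le_left _ _) ?_, ?_⟩
      · have key : M * ENNReal.ofReal L / (4 * (n:ℝ≥0∞))
            = ENNReal.ofReal p * (M / 2) := by
          rw [hop]
          have h24 : (4 : ℝ≥0∞) * n = (2 * n) * 2 := by ring
          rw [h24, div_eq_mul_inv, div_eq_mul_inv, div_eq_mul_inv,
            ENNReal.mul_inv (by simp [hnn0]) (by simp)]
          ring
        rw [key]
        exact mul_le_mul_right hx₀.le _
      · intro h0
        have : M / 2 < 0 := by simpa [h0] using hx₀
        simp at this
    -- main setup
  set c : ℝ := f x₀ ^ 2 with hcdef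
  have hc0 : 0 < c := by positivity
  set q : ℝ := min p (1/c) with hqdef
  have hq0 : 0 < q := lt_min hp0 (by positivity)
  have hqp : q ≤ p := min_le_left _ _
  have hq1 : q < 1 := lt_of_le_of_lt hqp (by linarith)
  have h1q : 0 ≤ 1 - q := by linarith
  refine ⟨ENNReal.ofReal q • Measure.dirac x₀ + ENNReal.ofReal (1-q) • Measure.dirac 0,
    ⟨?_⟩, ?_⟩
  · simp only [Measure.add_apply, Measure.smul_apply, smul_eq_mul,
      Measure.dirac_apply' _ MeasurableSet.univ]
    simp [← ENNReal.ofReal_add hq0.le h1q]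
  intro ghat hghat
  set s₀ : Fin n → ℝ × ℝ := fun _ => ((0:ℝ), (0:ℝ)) with hs₀def
  set g₀ : ℝ → ℝ := ghat s₀ with hg₀def
  set ε : ℝ := if c ≤ (g₀ x₀ - f x₀)^2 then 1 else -1 with hεdef
  have hεor : ε = 1 ∨ ε = -1 := by
    rw [hεdef]; split <;> simp
  have hεsq : ε ^ 2 = 1 := by rcases hεor with h | h <;> simp [h]
  have hεkey : c ≤ (g₀ x₀ - ε * f x₀)^2 := by
    rw [hεdef]
    split
    · simpa using ‹c ≤ (g₀ x₀ - f x₀)^2›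
    · have h1 : (g₀ x₀ - f x₀)^2 < c := by linarith [not_le.mp ‹¬ c ≤ (g₀ x₀ - f x₀)^2›]
      have : c ≤ (g₀ x₀ + f x₀)^2 := by nlinarith [sq_nonneg (g₀ x₀)]
      calc c ≤ (g₀ x₀ + f x₀)^2 := this
        _ = (g₀ x₀ - (-1) * f x₀)^2 := by ring
  have hmeasε : Measurable (fun x : ℝ => (x, ε * f x)) :=
    measurable_id.prodMk (hf.const_mul ε)
  have hmap : (ENNReal.ofReal q • Measure.dirac x₀
        + ENNReal.ofReal (1-q) • Measure.dirac 0).map (fun x => (x, ε * f x))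
      = ENNReal.ofReal q • Measure.dirac (x₀, ε * f x₀)
        + ENNReal.ofReal (1-q) • Measure.dirac ((0:ℝ), (0:ℝ)) := by
    rw [Measure.map_add _ _ hmeasε, Measure.map_smul, Measure.map_smul,
      Measure.map_dirac' hmeasε, Measure.map_dirac' hmeasε, hf0, mul_zero]
  have hx₀ne : x₀ ≠ 0 := by
    intro h; rw [h, hf0] at hfx₀; exact hfx₀ rfl
  refine ⟨ε, hεor, ⟨ε * f x₀ / x₀, ?_⟩, ?_, ?_⟩
  · rw [hmap]
    simp only [risk1, lintegral_add_measure, lintegral_smul_measure, lintegral_dirac]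
    have h1 : ε * f x₀ / x₀ * x₀ - ε * f x₀ = 0 := by field_simp; ring
    rw [h1]
    simp
  · rw [hmap]
    simp only [lintegral_add_measure, lintegral_smul_measure, lintegral_dirac]
    have h1 : (ε * f x₀)^2 = c := by rw [hcdef]; nlinarith [hεsq]
    rw [h1]
    have hqc : q * c ≤ 1 := by
      calc q * c ≤ (1/c) * c := by
            apply mul_le_mul_of_nonneg_right (min_le_right _ _) hc0.le
        _ = 1 := by field_simp
    calc ENNReal.ofReal q * ENNReal.ofReal c + ENNReal.ofReal (1-q) * ENNReal.ofReal ((0:ℝ)^2)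
        = ENNReal.ofReal (q * c) := by
          rw [ENNReal.ofReal_mul hq0.le]; simp
      _ ≤ 1 := by
          rw [show (1:ℝ≥0∞) = ENNReal.ofReal 1 by simp]
          exact ENNReal.ofReal_le_ofReal hqc
  · -- (iii)
    rw [hmap]
    haveI : IsProbabilityMeasure (ENNReal.ofReal q • Measure.dirac (x₀, ε * f x₀)
        + ENNReal.ofReal (1-q) • Measure.dirac ((0:ℝ), (0:ℝ))) := by
      constructor
      simp only [Measure.add_apply, Measure.smul_apply, smul_eq_mul,
        Measure.dirac_apply' _ MeasurableSet.univ]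
      simp [← ENNReal.ofReal_add hq0.le h1q]
    set Pε := ENNReal.ofReal q • Measure.dirac (x₀, ε * f x₀)
        + ENNReal.ofReal (1-q) • Measure.dirac ((0:ℝ), (0:ℝ)) with hPεdef
    -- the risk bound at s₀
    have hrisk : min (M * ENNReal.ofReal L / (4 * (n:ℝ≥0∞))) 1 ≤ risk1 Pε g₀ := by
      have h1 : ENNReal.ofReal q * ENNReal.ofReal ((g₀ x₀ - ε * f x₀)^2) ≤ risk1 Pε g₀ := by
        rw [hPεdef]
        simp only [risk1, lintegral_add_measure, lintegral_smul_measure, lintegral_dirac]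
        exact le_add_of_nonneg_right (by positivity)
      refine le_trans ?_ h1
      have h2 : ENNReal.ofReal q * ENNReal.ofReal c
          ≤ ENNReal.ofReal q * ENNReal.ofReal ((g₀ x₀ - ε * f x₀)^2) :=
        mul_le_mul_right (ENNReal.ofReal_le_ofReal hεkey) _
      refine le_trans ?_ h2
      rw [← ENNReal.ofReal_mul hq0.le]
      have hqc : q * c = min (p * c) 1 := by
        rw [hqdef, min_mul_of_nonneg _ _ hc0.le]
        congr 1
        field_simp
      rw [hqc]
      rcases le_total (p * c) 1 with h | h
      · rw [min_eq_left h]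
        exact hx₀T.trans_eq (ENNReal.ofReal_mul hp0.le).symm
      · rw [min_eq_right h, ENNReal.ofReal_one]
        exact min_le_right _ _
    -- the box of all-zero samples
    have hPε00 : ENNReal.ofReal (1-q) ≤ Pε {((0:ℝ),(0:ℝ))} := by
      rw [hPεdef]
      simp only [Measure.add_apply, Measure.smul_apply, smul_eq_mul]
      calc ENNReal.ofReal (1-q)
          = ENNReal.ofReal (1-q) * (Measure.dirac ((0:ℝ),(0:ℝ))) {((0:ℝ),(0:ℝ))} := by simp
        _ ≤ _ := le_add_of_nonneg_left (by positivity)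
    have hsubset : Set.univ.pi (fun _ : Fin n => ({((0:ℝ),(0:ℝ))} : Set (ℝ × ℝ))) ⊆
        {s | min (M * ENNReal.ofReal L / (4 * (n:ℝ≥0∞))) 1 ≤ risk1 Pε (ghat s)} := by
      intro s hs
      have hseq : s = s₀ := funext fun i => hs i (Set.mem_univ i)
      simpa [Set.mem_setOf_eq, hseq, ← hg₀def] using hrisk
    have hexp2 : Real.exp (-2*p) ≤ 1 - p := by
      have h1 : 2*p + 1 ≤ Real.exp (2*p) := Real.add_one_le_exp (2*p)
      have h2 : Real.exp (-2*p) * Real.exp (2*p) = 1 := by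
        rw [← Real.exp_add]; norm_num
      nlinarith [Real.exp_pos (-2*p), Real.exp_pos (2*p)]
    have hδbound : δ ≤ (1-q)^n := by
      have heq : δ = Real.exp (-2*p) ^ n := by
        rw [← Real.exp_nat_mul]
        have h3 : (n:ℝ) * (-2*p) = -L := by
          rw [hpdef]; field_simp
        rw [h3, hLdef, one_div, Real.log_inv, neg_neg, Real.exp_log hδ0]
      calc δ = Real.exp (-2*p)^n := heq
        _ ≤ (1-p)^n := pow_le_pow_left₀ (Real.exp_pos _).le hexp2 n
        _ ≤ (1-q)^n :=
            pow_le_pow_left₀ (by linarith : (0:ℝ) ≤ 1-p) (by linarith : 1-p ≤ 1-q) n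
    calc ENNReal.ofReal δ ≤ ENNReal.ofReal ((1-q)^n) := ENNReal.ofReal_le_ofReal hδbound
      _ = ENNReal.ofReal (1-q) ^ n := ENNReal.ofReal_pow h1q n
      _ = ∏ _i : Fin n, ENNReal.ofReal (1-q) := by simp
      _ ≤ ∏ _i : Fin n, Pε {((0:ℝ),(0:ℝ))} := Finset.prod_le_prod' (fun i _ => hPε00)
      _ = (Measure.pi fun _ : Fin n => Pε) (Set.univ.pi fun _ => {((0:ℝ),(0:ℝ))}) :=
          (Measure.pi_pi _ _).symm
      _ ≤ _ := measure_mono hsubset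
end
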